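/- In the avg-AL reduction instance built from a simple graph H = (V, E) and an integer k ≥ 3 with |V| + |E| > k and k+1 divisible by 3, under avg-AL utilities with fixed weight w ≥ n^4, the following holds: if a coalition C blocks the coalition structure Γ and the edge player e' belongs to C for some edge e = xy ∈ E, then all four players b_{x,e}, b_{y,e}, x', y' belong to C, and |C| < k'. -/
import Mathlib


open Finset
open scoped Classical

section AHGDefs

variable {N : Type*} [Fintype N] [DecidableEq N]

/-- The set of friends of player `i` inside coalition `C`. -/
noncomputable def friendsIn (G : SimpleGraph N) (C : Finset N) (i : N) : Finset N :=
  C.filter fun j => G.Adj i j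

/-- The friend-oriented valuation of coalition `C` by player `i`:
`val_i(C) = n·|F_i ∩ C| − |E_i ∩ C|`. -/
noncomputable def fval (G : SimpleGraph N) (C : Finset N) (i : N) : ℤ :=
  (Fintype.card N : ℤ) * ((friendsIn G C i).card : ℤ)
    - ((C.filter fun j => ¬ G.Adj i j ∧ j ≠ i).card : ℤ)

/-- Average-based equal-treatment utility. -/
noncomputable def utilAvgEQ (G : SimpleGraph N) (C : Finset N) (i : N) : ℚ :=
  (∑ c ∈ insert i (friendsIn G C i), (fval G C c : ℚ)) /
    ((insert i (friendsIn G C i)).card : ℚ)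

/-- Average-based altruistic-treatment utility with weight `w`. -/
noncomputable def utilAvgAL (G : SimpleGraph N) (w : ℚ) (C : Finset N) (i : N) : ℚ :=
  (fval G C i : ℚ) +
    w * (if (friendsIn G C i).Nonempty then
          (∑ c ∈ friendsIn G C i, (fval G C c : ℚ)) / ((friendsIn G C i).card : ℚ)
         else 0)

/-- Min-based equal-treatment utility. -/
noncomputable def utilMinEQ (G : SimpleGraph N) (C : Finset N) (i : N) : ℤ :=
  (insert i (friendsIn G C i)).inf' (insert_nonempty _ _) (fval G C)

/-- Min-based altruistic-treatment utility with weight `w`. -/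
noncomputable def utilMinAL (G : SimpleGraph N) (w : ℤ) (C : Finset N) (i : N) : ℤ :=
  fval G C i +
    w * (if h : (friendsIn G C i).Nonempty then (friendsIn G C i).inf' h (fval G C) else 0)

/-- A coalition structure (partition of the players), given as the map sending
each player to its coalition. -/
structure CoalitionStructure (N : Type*) [Fintype N] [DecidableEq N] where
  part : N → Finset N
  mem_part : ∀ i, i ∈ part i
  part_eq : ∀ i j, j ∈ part i → part j = part i

/-- A (nonempty) coalition `C` blocks the coalition structure `Γ`. -/
def Blocks {α : Type*} [LT α] (util : Finset N → N → α) (Γ : CoalitionStructure N)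
    (C : Finset N) : Prop :=
  C.Nonempty ∧ ∀ i ∈ C, util (Γ.part i) i < util C i

/-- Core stability: no nonempty coalition blocks `Γ`. -/
def CoreStable {α : Type*} [LT α] (util : Finset N → N → α)
    (Γ : CoalitionStructure N) : Prop :=
  ¬ ∃ C : Finset N, Blocks util Γ C

/-- The base clique of a pinched `(d,k')`-dome gadget on `P` with top player `top`
and (unique) mid player `mid`. -/
noncomputable def pdomeBase (P : Finset N) (top mid : N) : Finset N :=
  P \ {top, mid}

/-- `P` carries a pinched `(d,k')`-dome gadget of the graph `G`, with top player `top`,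
the unique mid player `mid` (obtained by identifying the `d` mid players) and fringe
players `fringe i`. -/
structure IsPinchedDomeGadget (G : SimpleGraph N) (d k' : ℕ) (P : Finset N) (top mid : N)
    (fringe : Fin d → N) : Prop where
  card_eq : P.card = k' - d + 1
  top_mem : top ∈ P
  mid_mem : mid ∈ P
  mid_ne_top : mid ≠ top
  fringe_mem : ∀ i, fringe i ∈ pdomeBase P top mid
  fringe_inj : Function.Injective fringe
  adj_iff : ∀ x ∈ P, ∀ y ∈ P, (G.Adj x y ↔
    ((x = top ∧ y = mid) ∨ (y = top ∧ x = mid) ∨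
     (x ∈ pdomeBase P top mid ∧ y ∈ pdomeBase P top mid ∧ x ≠ y) ∨
     (x = mid ∧ ∃ i, y = fringe i) ∨ (y = mid ∧ ∃ i, x = fringe i)))

/-- `P` carries a pinched `(d,k')`-dome gadget with top player `top`. -/
def HasPinchedDomeGadget (G : SimpleGraph N) (d k' : ℕ) (P : Finset N) (top : N) : Prop :=
  ∃ (mid : N) (fringe : Fin d → N), IsPinchedDomeGadget G d k' P top mid fringe

/-- The gadget size `k' = k + 3·(k choose 2) + 1` of the average-based reductions. -/
def avgK' (k : ℕ) : ℕ := k + 3 * Nat.choose k 2 + 1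

variable {V : Type*} [Fintype V] [DecidableEq V]

/-- `Γ` is the coalition structure of the average-based reduction instances: its
coalitions are exactly the gadget player sets. -/
def IsAvgGamma (H : SimpleGraph V) (Pv : V → Finset N) (Pe : Sym2 V → Finset N)
    (Pve : V → Sym2 V → Finset N) (Γ : CoalitionStructure N) : Prop :=
  (∀ v : V, ∀ i ∈ Pv v, Γ.part i = Pv v) ∧
  (∀ e ∈ H.edgeSet, ∀ i ∈ Pe e, Γ.part i = Pe e) ∧
  (∀ (v : V), ∀ e ∈ H.edgeSet, v ∈ e → ∀ i ∈ Pve v e, Γ.part i = Pve v e)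

/-- The avg-AL reduction instance built from the graph `H` and `k ≥ 3` with `3 ∣ k+1`:
`G` is the constructed network of friends; `Pv v` and `Pe e` carry pinched
`(2,k')`-dome gadgets with top players `vp v` and `ep e`, and `Pve v e` a pinched
`((k+1)/3,k')`-dome gadget with top player `bp v e`. For each edge `e = xy` of `H`,
the player `bp x e` is further adjacent to `vp x`, to `ep e`, and to `bp y e`,
and there are no other edges. -/
structure AvgALReduction (H : SimpleGraph V) (k : ℕ) (G : SimpleGraph N)
    (Pv : V → Finset N) (Pe : Sym2 V → Finset N) (Pve : V → Sym2 V → Finset N)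
    (vp : V → N) (ep : Sym2 V → N) (bp : V → Sym2 V → N) : Prop where
  pdome_v : ∀ v : V, HasPinchedDomeGadget G 2 (avgK' k) (Pv v) (vp v)
  pdome_e : ∀ e ∈ H.edgeSet, HasPinchedDomeGadget G 2 (avgK' k) (Pe e) (ep e)
  pdome_ve : ∀ (v : V), ∀ e ∈ H.edgeSet, v ∈ e →
    HasPinchedDomeGadget G ((k + 1) / 3) (avgK' k) (Pve v e) (bp v e)
  disj_vv : ∀ v w : V, v ≠ w → Disjoint (Pv v) (Pv w)
  disj_ee : ∀ e ∈ H.edgeSet, ∀ f ∈ H.edgeSet, e ≠ f → Disjoint (Pe e) (Pe f)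
  disj_bb : ∀ (v : V), ∀ e ∈ H.edgeSet, v ∈ e → ∀ (w : V), ∀ f ∈ H.edgeSet, w ∈ f →
    (v, e) ≠ (w, f) → Disjoint (Pve v e) (Pve w f)
  disj_v_e : ∀ (v : V), ∀ e ∈ H.edgeSet, Disjoint (Pv v) (Pe e)
  disj_v_b : ∀ (v w : V), ∀ f ∈ H.edgeSet, w ∈ f → Disjoint (Pv v) (Pve w f)
  disj_e_b : ∀ e ∈ H.edgeSet, ∀ (w : V), ∀ f ∈ H.edgeSet, w ∈ f →
    Disjoint (Pe e) (Pve w f)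
  cover : ∀ x : N, (∃ v : V, x ∈ Pv v) ∨ (∃ e ∈ H.edgeSet, x ∈ Pe e) ∨
    (∃ (v : V), ∃ e ∈ H.edgeSet, v ∈ e ∧ x ∈ Pve v e)
  adj_bv : ∀ (v : V), ∀ e ∈ H.edgeSet, v ∈ e → G.Adj (bp v e) (vp v)
  adj_be : ∀ (v : V), ∀ e ∈ H.edgeSet, v ∈ e → G.Adj (bp v e) (ep e)
  adj_bb : ∀ x y : V, H.Adj x y → G.Adj (bp x s(x, y)) (bp y s(x, y))
  adj_cases : ∀ x y : N, G.Adj x y →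
    (∃ v : V, x ∈ Pv v ∧ y ∈ Pv v) ∨
    (∃ e ∈ H.edgeSet, x ∈ Pe e ∧ y ∈ Pe e) ∨
    (∃ (v : V), ∃ e ∈ H.edgeSet, v ∈ e ∧ x ∈ Pve v e ∧ y ∈ Pve v e) ∨
    (∃ (v : V), ∃ e ∈ H.edgeSet, v ∈ e ∧
      ((x = bp v e ∧ y = vp v) ∨ (y = bp v e ∧ x = vp v))) ∨
    (∃ (v : V), ∃ e ∈ H.edgeSet, v ∈ e ∧
      ((x = bp v e ∧ y = ep e) ∨ (y = bp v e ∧ x = ep e))) ∨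
    (∃ a b : V, H.Adj a b ∧
      ((x = bp a s(a, b) ∧ y = bp b s(a, b)) ∨ (y = bp a s(a, b) ∧ x = bp b s(a, b))))
end AHGDefs

set_option linter.unusedSectionVars false

section MyAux

variable {N : Type*} [Fintype N] [DecidableEq N]

lemma mem_friendsIn {G : SimpleGraph N} {C : Finset N} {i j : N} :
    j ∈ friendsIn G C i ↔ j ∈ C ∧ G.Adj i j := by
  simp [friendsIn]

lemma friendsIn_subset {G : SimpleGraph N} {C : Finset N} {i : N} :
    friendsIn G C i ⊆ C := filter_subset _ _

lemma friendsIn_card_le {G : SimpleGraph N} {C : Finset N} {i : N} :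
    (friendsIn G C i).card ≤ Fintype.card N - 1 := by
  have h : friendsIn G C i ⊆ Finset.univ.erase i := by
    intro j hj
    rcases mem_friendsIn.mp hj with ⟨_, hadj⟩
    exact Finset.mem_erase.mpr ⟨hadj.ne', Finset.mem_univ j⟩
  calc (friendsIn G C i).card ≤ (Finset.univ.erase i).card := card_le_card h
    _ = Fintype.card N - 1 := by
        rw [Finset.card_erase_of_mem (mem_univ i), Finset.card_univ]

lemma fval_eq (G : SimpleGraph N) (C : Finset N) (i : N) :
    fval G C i = ((Fintype.card N : ℤ) + 1) * (friendsIn G C i).card - C.card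
      + (if i ∈ C then 1 else 0) := by
  have key : (C.filter fun j => ¬ G.Adj i j ∧ j ≠ i).card + (friendsIn G C i).card
      + (if i ∈ C then 1 else 0) = C.card := by
    have hsplit : (C.filter fun j => G.Adj i j).card
        + (C.filter fun j => ¬ G.Adj i j).card = C.card :=
      Finset.card_filter_add_card_filter_not _
    have hsplit2 : ((C.filter fun j => ¬ G.Adj i j).filter fun j => j ≠ i).card
        + ((C.filter fun j => ¬ G.Adj i j).filter fun j => ¬ j ≠ i).card
        = (C.filter fun j => ¬ G.Adj i j).card :=
      Finset.card_filter_add_card_filter_not _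
    have h1 : ((C.filter fun j => ¬ G.Adj i j).filter fun j => j ≠ i)
        = C.filter fun j => ¬ G.Adj i j ∧ j ≠ i := by
      rw [Finset.filter_filter]
    have h2 : ((C.filter fun j => ¬ G.Adj i j).filter fun j => ¬ j ≠ i)
        = if i ∈ C then {i} else ∅ := by
      ext j
      simp only [Finset.mem_filter, not_not]
      constructor
      · rintro ⟨⟨hjC, _⟩, rfl⟩
        simp [hjC]
      · intro hj
        by_cases hiC : i ∈ C
        · simp only [if_pos hiC, Finset.mem_singleton] at hj
          subst hj
          exact ⟨⟨hiC, fun h => G.irrefl h⟩, rfl⟩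
        · simp [if_neg hiC] at hj
    have h3 : ((C.filter fun j => ¬ G.Adj i j).filter fun j => ¬ j ≠ i).card
        = if i ∈ C then 1 else 0 := by
      rw [h2]; split_ifs <;> simp
    rw [h1, h3] at hsplit2
    have h4 : (friendsIn G C i) = C.filter fun j => G.Adj i j := rfl
    rw [← h4] at hsplit
    omega
  rw [fval]
  split_ifs at key ⊢ with hiC
  · have : ((C.filter fun j => ¬ G.Adj i j ∧ j ≠ i).card : ℤ)
        = (C.card : ℤ) - (friendsIn G C i).card - 1 := by
      push_cast [← key]; ring
    rw [this]; ring
  · have : ((C.filter fun j => ¬ G.Adj i j ∧ j ≠ i).card : ℤ)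
        = (C.card : ℤ) - (friendsIn G C i).card := by
      push_cast [← key]; ring
    rw [this]; ring

lemma fval_le_mul (G : SimpleGraph N) (C : Finset N) (i : N) :
    fval G C i ≤ (Fintype.card N : ℤ) * (friendsIn G C i).card := by
  rw [fval]
  have : (0 : ℤ) ≤ ((C.filter fun j => ¬ G.Adj i j ∧ j ≠ i).card : ℤ) := Int.ofNat_nonneg _
  linarith

lemma fval_upper (G : SimpleGraph N) (C : Finset N) (i : N) (hn : 1 ≤ Fintype.card N) :
    fval G C i ≤ (Fintype.card N : ℤ) * ((Fintype.card N : ℤ) - 1) := by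
  refine (fval_le_mul G C i).trans ?_
  have h1 : ((friendsIn G C i).card : ℤ) ≤ (Fintype.card N : ℤ) - 1 := by
    have := friendsIn_card_le (G := G) (C := C) (i := i)
    omega
  have h2 : (0:ℤ) ≤ (Fintype.card N : ℤ) := Int.ofNat_nonneg _
  exact mul_le_mul_of_nonneg_left h1 h2

lemma fval_lower (G : SimpleGraph N) (C : Finset N) (i : N) :
    -((Fintype.card N : ℤ) - 1) ≤ fval G C i := by
  rw [fval]
  have h1 : ((C.filter fun j => ¬ G.Adj i j ∧ j ≠ i).card : ℤ) ≤ (Fintype.card N : ℤ) - 1 := by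
    have hsub : (C.filter fun j => ¬ G.Adj i j ∧ j ≠ i) ⊆ Finset.univ.erase i := by
      intro j hj
      rcases Finset.mem_filter.mp hj with ⟨_, _, hne⟩
      exact Finset.mem_erase.mpr ⟨hne, Finset.mem_univ j⟩
    have := card_le_card hsub
    rw [Finset.card_erase_of_mem (mem_univ i), Finset.card_univ] at this
    have hpos : 1 ≤ Fintype.card N := Fintype.card_pos_iff.mpr ⟨i⟩
    omega
  have h2 : (0:ℤ) ≤ (Fintype.card N : ℤ) * ((friendsIn G C i).card : ℤ) :=
    mul_nonneg (Int.ofNat_nonneg _) (Int.ofNat_nonneg _)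
  linarith

/-- The altruistic averaging term. -/
noncomputable def aterm (G : SimpleGraph N) (C : Finset N) (i : N) : ℚ :=
  if (friendsIn G C i).Nonempty then
    (∑ c ∈ friendsIn G C i, (fval G C c : ℚ)) / ((friendsIn G C i).card : ℚ)
  else 0

lemma utilAvgAL_eq (G : SimpleGraph N) (w : ℚ) (C : Finset N) (i : N) :
    utilAvgAL G w C i = (fval G C i : ℚ) + w * aterm G C i := rfl

lemma aterm_eq {G : SimpleGraph N} {C : Finset N} {i : N} {F : Finset N}
    (hF : friendsIn G C i = F) (hne : F.Nonempty) :
    aterm G C i = ((∑ b ∈ F, fval G C b : ℤ) : ℚ) / (F.card : ℚ) := by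
  rw [aterm, hF, if_pos hne]
  push_cast
  rfl

lemma aterm_empty {G : SimpleGraph N} {C : Finset N} {i : N}
    (hF : friendsIn G C i = ∅) : aterm G C i = 0 := by
  rw [aterm, hF]
  simp

lemma aterm_le_bound {G : SimpleGraph N} {C : Finset N} {i : N} {β : ℤ}
    (h0 : 0 ≤ β) (hb : ∀ b ∈ friendsIn G C i, fval G C b ≤ β) :
    aterm G C i ≤ (β : ℚ) := by
  rw [aterm]
  split_ifs with hne
  · rw [div_le_iff₀ (by exact_mod_cast card_pos.mpr hne)]
    have hsum : (∑ c ∈ friendsIn G C i, (fval G C c : ℚ))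
        ≤ ∑ _c ∈ friendsIn G C i, (β : ℚ) := by
      apply Finset.sum_le_sum
      intro b hbmem
      exact_mod_cast hb b hbmem
    rw [Finset.sum_const, nsmul_eq_mul] at hsum
    calc (∑ c ∈ friendsIn G C i, (fval G C c : ℚ))
        ≤ ((friendsIn G C i).card : ℚ) * β := hsum
      _ = β * ((friendsIn G C i).card : ℚ) := by ring
  · exact_mod_cast h0

end MyAux
section MyAux2

variable {N : Type*} [Fintype N] [DecidableEq N]

lemma aterm_repr (G : SimpleGraph N) (C : Finset N) (i : N) (hn : 2 ≤ Fintype.card N) :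
    ∃ (p : ℤ) (q : ℕ), aterm G C i = (p : ℚ) / (q : ℚ) ∧ 1 ≤ q ∧
      q ≤ Fintype.card N - 1 := by
  rcases (friendsIn G C i).eq_empty_or_nonempty with hF | hF
  · exact ⟨0, 1, by simp [aterm_empty hF], le_refl 1, by omega⟩
  · refine ⟨∑ b ∈ friendsIn G C i, fval G C b, (friendsIn G C i).card,
      aterm_eq rfl hF, card_pos.mpr hF, friendsIn_card_le⟩

/-- Key dominance lemma: a strict `utilAvgAL` improvement forces a weak
improvement of the averaging term. -/
lemma aterm_mono {G : SimpleGraph N} {w : ℚ} (hw : (Fintype.card N : ℚ) ^ 4 ≤ w)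
    (hn : 2 ≤ Fintype.card N) {X Y : Finset N} {i : N}
    (h : utilAvgAL G w X i < utilAvgAL G w Y i) :
    aterm G X i ≤ aterm G Y i := by
  by_contra hlt
  push_neg at hlt
  set n : ℕ := Fintype.card N with hndef
  obtain ⟨pX, qX, hXr, hqX1, hqXn⟩ := aterm_repr G X i hn
  obtain ⟨pY, qY, hYr, hqY1, hqYn⟩ := aterm_repr G Y i hn
  have hqXpos : (0:ℚ) < (qX : ℚ) := by exact_mod_cast hqX1
  have hqYpos : (0:ℚ) < (qY : ℚ) := by exact_mod_cast hqY1
  -- the difference of the averaging terms is at least 1/(n-1)^2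
  have hdiff : (1 : ℚ) / (((n:ℚ) - 1) * ((n:ℚ) - 1)) ≤ aterm G X i - aterm G Y i := by
    have hnum : (0:ℚ) < (pX * qY - pY * qX : ℤ) := by
      have : (0:ℚ) < aterm G X i - aterm G Y i := by linarith
      rw [hXr, hYr, div_sub_div _ _ (ne_of_gt hqXpos) (ne_of_gt hqYpos)] at this
      have hd : (0:ℚ) < (qX : ℚ) * (qY : ℚ) := mul_pos hqXpos hqYpos
      have := (div_pos_iff.mp this)
      rcases this with ⟨hnum, _⟩ | ⟨_, hneg⟩
      · push_cast; linarith
      · linarith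
    have hnum1 : (1:ℚ) ≤ (pX * qY - pY * qX : ℤ) := by
      have : (0:ℤ) < pX * qY - pY * qX := by exact_mod_cast hnum
      exact_mod_cast this
    have heq : aterm G X i - aterm G Y i = ((pX * qY - pY * qX : ℤ) : ℚ) / ((qX:ℚ) * qY) := by
      rw [hXr, hYr, div_sub_div _ _ (ne_of_gt hqXpos) (ne_of_gt hqYpos)]
      push_cast
      ring_nf
    rw [heq]
    have hd : (0:ℚ) < (qX : ℚ) * (qY : ℚ) := mul_pos hqXpos hqYpos
    have hqb : (qX : ℚ) * (qY : ℚ) ≤ ((n:ℚ) - 1) * ((n:ℚ) - 1) := by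
      have h1 : (qX : ℚ) ≤ (n:ℚ) - 1 := by
        have : (qX : ℤ) ≤ (n : ℤ) - 1 := by omega
        exact_mod_cast this
      have h2 : (qY : ℚ) ≤ (n:ℚ) - 1 := by
        have : (qY : ℤ) ≤ (n : ℤ) - 1 := by omega
        exact_mod_cast this
      have : (0:ℚ) ≤ (qY:ℚ) := le_of_lt hqYpos
      nlinarith
    calc (1:ℚ) / (((n:ℚ) - 1) * ((n:ℚ) - 1)) ≤ 1 / ((qX:ℚ) * qY) := by
          apply one_div_le_one_div_of_le hd hqb
      _ ≤ ((pX * qY - pY * qX : ℤ) : ℚ) / ((qX:ℚ) * qY) :=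
          div_le_div_of_nonneg_right hnum1 hd.le
  -- fval difference is bounded by n^2 - 1
  have hfd : (fval G Y i : ℚ) - (fval G X i : ℚ) ≤ (n:ℚ) * ((n:ℚ) - 1) + ((n:ℚ) - 1) := by
    have h1 : fval G Y i ≤ (n : ℤ) * ((n:ℤ) - 1) := fval_upper G Y i (by omega)
    have h2 : -((n:ℤ) - 1) ≤ fval G X i := fval_lower G X i
    have h1' : (fval G Y i : ℚ) ≤ (n:ℚ) * ((n:ℚ) - 1) := by exact_mod_cast h1
    have h2' : -((n:ℚ) - 1) ≤ (fval G X i : ℚ) := by exact_mod_cast h2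
    linarith
  -- combine
  have hutil : w * (aterm G X i - aterm G Y i) < (fval G Y i : ℚ) - (fval G X i : ℚ) := by
    rw [utilAvgAL_eq, utilAvgAL_eq] at h
    nlinarith [h]
  have hwpos : (0:ℚ) < w := by
    have hn0 : (0:ℚ) < (n:ℚ) := by exact_mod_cast (by omega : 0 < n)
    have := pow_pos hn0 4
    linarith
  have hn1 : (1:ℚ) ≤ (n:ℚ) - 1 := by
    have : (2:ℚ) ≤ (n:ℚ) := by exact_mod_cast hn
    linarith
  have hstep : w * (1 / (((n:ℚ) - 1) * ((n:ℚ) - 1))) ≤ w * (aterm G X i - aterm G Y i) :=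
    mul_le_mul_of_nonneg_left hdiff (le_of_lt hwpos)
  have hfin : (n:ℚ)^4 < ((n:ℚ) * ((n:ℚ) - 1) + ((n:ℚ) - 1)) * (((n:ℚ) - 1) * ((n:ℚ) - 1)) := by
    have h2n : (2:ℚ) ≤ (n:ℚ) := by exact_mod_cast hn
    have hd2 : (0:ℚ) < ((n:ℚ) - 1) * ((n:ℚ) - 1) := by nlinarith
    have hA : w * (1 / (((n:ℚ) - 1) * ((n:ℚ) - 1))) < (n:ℚ) * ((n:ℚ) - 1) + ((n:ℚ) - 1) := by
      calc w * (1 / (((n:ℚ) - 1) * ((n:ℚ) - 1))) ≤ w * (aterm G X i - aterm G Y i) := hstep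
        _ < (fval G Y i : ℚ) - (fval G X i : ℚ) := hutil
        _ ≤ _ := hfd
    have hw' : w / (((n:ℚ) - 1) * ((n:ℚ) - 1)) < (n:ℚ) * ((n:ℚ) - 1) + ((n:ℚ) - 1) := by
      rw [div_eq_mul_one_div]; exact hA
    have := (div_lt_iff₀ hd2).mp hw'
    linarith
  have h2n : (2:ℚ) ≤ (n:ℚ) := by exact_mod_cast hn
  nlinarith [hfin]

end MyAux2
section MyAux3

variable {N : Type*} [Fintype N] [DecidableEq N]

/-- The set of fringe players. -/
noncomputable def fringeSet {d : ℕ} (fr : Fin d → N) : Finset N :=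
  Finset.univ.image fr

variable {G : SimpleGraph N} {d k' : ℕ} {P : Finset N} {t mid : N} {fr : Fin d → N}

lemma mem_fringeSet {z : N} : z ∈ fringeSet fr ↔ ∃ i, z = fr i := by
  simp [fringeSet, eq_comm]

lemma fringe_subset (st : IsPinchedDomeGadget G d k' P t mid fr) :
    fringeSet fr ⊆ pdomeBase P t mid := by
  intro z hz
  rcases mem_fringeSet.mp hz with ⟨i, rfl⟩
  exact st.fringe_mem i

lemma card_fringeSet (st : IsPinchedDomeGadget G d k' P t mid fr) :
    (fringeSet fr).card = d := by
  rw [fringeSet, Finset.card_image_of_injective _ st.fringe_inj, Finset.card_univ,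
    Fintype.card_fin]

lemma base_subset : pdomeBase P t mid ⊆ P := sdiff_subset

lemma top_not_base : t ∉ pdomeBase P t mid := by
  simp [pdomeBase]

lemma mid_not_base : mid ∉ pdomeBase P t mid := by
  simp [pdomeBase]

lemma mem_base_iff {z : N} : z ∈ pdomeBase P t mid ↔ z ∈ P ∧ z ≠ t ∧ z ≠ mid := by
  simp [pdomeBase, and_assoc]

lemma card_base (st : IsPinchedDomeGadget G d k' P t mid fr) :
    (pdomeBase P t mid).card + 2 = P.card := by
  have hsub : ({t, mid} : Finset N) ⊆ P := by
    intro z hz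
    rcases Finset.mem_insert.mp hz with rfl | hz
    · exact st.top_mem
    · rw [Finset.mem_singleton.mp hz]; exact st.mid_mem
  have := Finset.card_sdiff_add_card_eq_card hsub
  have hc2 : ({t, mid} : Finset N).card = 2 := by
    rw [Finset.card_insert_of_notMem (by simp [st.mid_ne_top.symm]), Finset.card_singleton]
  rw [pdomeBase]
  omega

/-- Adjacency inside the gadget, seen from a base player. -/
lemma adj_base_iff (st : IsPinchedDomeGadget G d k' P t mid fr)
    (hclosed : ∀ i ∈ P, i ≠ t → ∀ z, G.Adj i z → z ∈ P)
    {b : N} (hb : b ∈ pdomeBase P t mid) (z : N) :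
    G.Adj b z ↔ (z ∈ pdomeBase P t mid ∧ z ≠ b) ∨ (z = mid ∧ b ∈ fringeSet fr) := by
  obtain ⟨hbP, hbt, hbm⟩ := mem_base_iff.mp hb
  constructor
  · intro hadj
    have hzP : z ∈ P := hclosed b hbP hbt z hadj
    rcases (st.adj_iff b hbP z hzP).mp hadj with ⟨h1, _⟩ | ⟨_, h2⟩ | ⟨_, h2, h3⟩ | ⟨h1, _⟩ | ⟨h1, h2⟩
    · exact absurd h1 hbt
    · exact absurd h2 hbm
    · exact Or.inl ⟨h2, fun h => h3 h.symm⟩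
    · exact absurd h1 hbm
    · exact Or.inr ⟨h1, mem_fringeSet.mpr h2⟩
  · intro hz
    rcases hz with ⟨hzB, hzb⟩ | ⟨hzm, hbf⟩
    · exact (st.adj_iff b hbP z (base_subset hzB)).mpr
        (Or.inr (Or.inr (Or.inl ⟨hb, hzB, fun h => hzb h.symm⟩)))
    · exact (st.adj_iff b hbP z (hzm ▸ st.mid_mem)).mpr
        (Or.inr (Or.inr (Or.inr (Or.inr ⟨hzm, mem_fringeSet.mp hbf⟩))))

/-- Adjacency inside the gadget, seen from the mid player. -/
lemma adj_mid_iff (st : IsPinchedDomeGadget G d k' P t mid fr)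
    (hclosed : ∀ i ∈ P, i ≠ t → ∀ z, G.Adj i z → z ∈ P) (z : N) :
    G.Adj mid z ↔ (z = t ∨ z ∈ fringeSet fr) := by
  have hmB : mid ∉ pdomeBase P t mid := mid_not_base
  constructor
  · intro hadj
    have hzP : z ∈ P := hclosed mid st.mid_mem st.mid_ne_top z hadj
    rcases (st.adj_iff mid st.mid_mem z hzP).mp hadj with ⟨h1, _⟩ | ⟨h1, _⟩ | ⟨h1, _, _⟩
      | ⟨_, h2⟩ | ⟨_, h2⟩
    · exact absurd h1 st.mid_ne_top
    · exact Or.inl h1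
    · exact absurd h1 hmB
    · exact Or.inr (mem_fringeSet.mpr h2)
    · rcases h2 with ⟨i, hi⟩
      exact absurd (hi ▸ st.fringe_mem i) hmB
  · intro hz
    rcases hz with rfl | hzf
    · exact (st.adj_iff mid st.mid_mem z st.top_mem).mpr (Or.inr (Or.inl ⟨rfl, rfl⟩))
    · exact (st.adj_iff mid st.mid_mem z (base_subset (fringe_subset st hzf))).mpr
        (Or.inr (Or.inr (Or.inr (Or.inl ⟨rfl, mem_fringeSet.mp hzf⟩))))

/-- Adjacency from the top player, within the gadget. -/
lemma adj_top_of_mem (st : IsPinchedDomeGadget G d k' P t mid fr)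
    {z : N} (hzP : z ∈ P) : G.Adj t z ↔ z = mid := by
  constructor
  · intro hadj
    rcases (st.adj_iff t st.top_mem z hzP).mp hadj with ⟨_, h2⟩ | ⟨_, h2⟩ | ⟨h1, _, _⟩
      | ⟨h1, _⟩ | ⟨_, h2⟩
    · exact h2
    · exact absurd h2.symm st.mid_ne_top
    · exact absurd h1 top_not_base
    · exact absurd h1 (Ne.symm st.mid_ne_top)
    · rcases h2 with ⟨i, hi⟩
      exact absurd (hi ▸ st.fringe_mem i) top_not_base
  · intro hzm
    exact (st.adj_iff t st.top_mem z hzP).mpr (Or.inl ⟨rfl, hzm⟩)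

lemma friendsIn_base (st : IsPinchedDomeGadget G d k' P t mid fr)
    (hclosed : ∀ i ∈ P, i ≠ t → ∀ z, G.Adj i z → z ∈ P)
    {b : N} (hb : b ∈ pdomeBase P t mid) (hbf : b ∉ fringeSet fr) (X : Finset N) :
    friendsIn G X b = (X ∩ pdomeBase P t mid).erase b := by
  ext z
  rw [mem_friendsIn, adj_base_iff st hclosed hb z]
  simp only [Finset.mem_erase, Finset.mem_inter]
  constructor
  · rintro ⟨hzX, ⟨hzB, hzb⟩ | ⟨_, hbfr⟩⟩
    · exact ⟨hzb, hzX, hzB⟩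
    · exact absurd hbfr hbf
  · rintro ⟨hzb, hzX, hzB⟩
    exact ⟨hzX, Or.inl ⟨hzB, hzb⟩⟩

lemma friendsIn_fringe (st : IsPinchedDomeGadget G d k' P t mid fr)
    (hclosed : ∀ i ∈ P, i ≠ t → ∀ z, G.Adj i z → z ∈ P)
    {b : N} (hbf : b ∈ fringeSet fr) (X : Finset N) :
    friendsIn G X b = ((X ∩ pdomeBase P t mid).erase b) ∪ (X ∩ {mid}) := by
  have hb : b ∈ pdomeBase P t mid := fringe_subset st hbf
  ext z
  rw [mem_friendsIn, adj_base_iff st hclosed hb z]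
  simp only [Finset.mem_union, Finset.mem_erase, Finset.mem_inter, Finset.mem_singleton]
  constructor
  · rintro ⟨hzX, ⟨hzB, hzb⟩ | ⟨rfl, _⟩⟩
    · exact Or.inl ⟨hzb, hzX, hzB⟩
    · exact Or.inr ⟨hzX, rfl⟩
  · rintro (⟨hzb, hzX, hzB⟩ | ⟨hzX, rfl⟩)
    · exact ⟨hzX, Or.inl ⟨hzB, hzb⟩⟩
    · exact ⟨hzX, Or.inr ⟨rfl, hbf⟩⟩

lemma friendsIn_mid (st : IsPinchedDomeGadget G d k' P t mid fr)
    (hclosed : ∀ i ∈ P, i ≠ t → ∀ z, G.Adj i z → z ∈ P) (X : Finset N) :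
    friendsIn G X mid = X ∩ insert t (fringeSet fr) := by
  ext z
  rw [mem_friendsIn, adj_mid_iff st hclosed z]
  simp only [Finset.mem_inter, Finset.mem_insert]

lemma friendsIn_top_subset (st : IsPinchedDomeGadget G d k' P t mid fr)
    {X : Finset N} (hX : X ⊆ P) :
    friendsIn G X t = X ∩ {mid} := by
  ext z
  rw [mem_friendsIn]
  simp only [Finset.mem_inter, Finset.mem_singleton]
  constructor
  · rintro ⟨hzX, hadj⟩
    exact ⟨hzX, (adj_top_of_mem st (hX hzX)).mp hadj⟩
  · rintro ⟨hzX, rfl⟩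
    exact ⟨hzX, (adj_top_of_mem st (hX hzX)).mpr rfl⟩

end MyAux3
section MyAux4

variable {N : Type*} [Fintype N] [DecidableEq N]
variable {G : SimpleGraph N} {d k' M : ℕ} {P : Finset N} {t mid : N} {fr : Fin d → N}

lemma fval_P_base (st : IsPinchedDomeGadget G d k' P t mid fr)
    (hclosed : ∀ i ∈ P, i ≠ t → ∀ z, G.Adj i z → z ∈ P)
    (hM : P.card = M + 2) {b : N} (hb : b ∈ pdomeBase P t mid) :
    fval G P b = ((Fintype.card N : ℤ) + 1) * ((M:ℤ) - 1) - ((M:ℤ) + 1)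
      + (if b ∈ fringeSet fr then (Fintype.card N : ℤ) + 1 else 0) := by
  have hMB : (pdomeBase P t mid).card = M := by
    have := card_base st; omega
  have hPB : P ∩ pdomeBase P t mid = pdomeBase P t mid :=
    Finset.inter_eq_right.mpr base_subset
  have hPm : P ∩ ({mid} : Finset N) = {mid} :=
    Finset.inter_eq_right.mpr (Finset.singleton_subset_iff.mpr st.mid_mem)
  have hbP : b ∈ P := base_subset hb
  have hcerase : (((pdomeBase P t mid).erase b).card : ℤ) = (M : ℤ) - 1 := by
    rw [Finset.cast_card_erase_of_mem hb, hMB]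
  by_cases hbf : b ∈ fringeSet fr
  · rw [fval_eq, friendsIn_fringe st hclosed hbf P, hPB, hPm, if_pos hbP, if_pos hbf]
    have hdisj : Disjoint ((pdomeBase P t mid).erase b) ({mid} : Finset N) :=
      Finset.disjoint_singleton_right.mpr (fun h => mid_not_base (Finset.mem_of_mem_erase h))
    rw [Finset.card_union_of_disjoint hdisj, Finset.card_singleton, hM]
    push_cast
    rw [hcerase]
    ring
  · rw [fval_eq, friendsIn_base st hclosed hb hbf P, hPB, if_pos hbP, if_neg hbf]
    rw [hM, hcerase]
    push_cast
    ring

lemma fval_P_mid (st : IsPinchedDomeGadget G d k' P t mid fr)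
    (hclosed : ∀ i ∈ P, i ≠ t → ∀ z, G.Adj i z → z ∈ P)
    (hM : P.card = M + 2) :
    fval G P mid = ((Fintype.card N : ℤ) + 1) * ((d:ℤ) + 1) - ((M:ℤ) + 1) := by
  have htf : t ∉ fringeSet fr := fun h => top_not_base (fringe_subset st h)
  have hsub : insert t (fringeSet fr) ⊆ P := by
    intro z hz
    rcases Finset.mem_insert.mp hz with rfl | hz
    · exact st.top_mem
    · exact base_subset (fringe_subset st hz)
  rw [fval_eq, friendsIn_mid st hclosed P, Finset.inter_eq_right.mpr hsub,
    Finset.card_insert_of_notMem htf, card_fringeSet st, if_pos st.mid_mem, hM]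
  push_cast
  ring

lemma fval_P_top (st : IsPinchedDomeGadget G d k' P t mid fr)
    (hM : P.card = M + 2) :
    fval G P t = (Fintype.card N : ℤ) - (M:ℤ) := by
  rw [fval_eq, friendsIn_top_subset st (subset_refl P),
    Finset.inter_eq_right.mpr (Finset.singleton_subset_iff.mpr st.mid_mem),
    Finset.card_singleton, if_pos st.top_mem, hM]
  push_cast
  ring

lemma filter_fringe_erase (st : IsPinchedDomeGadget G d k' P t mid fr)
    {c : N} (hc : c ∈ pdomeBase P t mid) :
    ((pdomeBase P t mid).erase c).filter (· ∈ fringeSet fr) = (fringeSet fr).erase c := by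
  ext z
  simp only [Finset.mem_filter, Finset.mem_erase]
  constructor
  · rintro ⟨⟨hzc, _⟩, hzf⟩
    exact ⟨hzc, hzf⟩
  · rintro ⟨hzc, hzf⟩
    exact ⟨⟨hzc, fringe_subset st hzf⟩, hzf⟩

lemma sum_fval_P_erase (st : IsPinchedDomeGadget G d k' P t mid fr)
    (hclosed : ∀ i ∈ P, i ≠ t → ∀ z, G.Adj i z → z ∈ P)
    (hM : P.card = M + 2) {c : N} (hc : c ∈ pdomeBase P t mid) :
    ∑ b ∈ (pdomeBase P t mid).erase c, fval G P b
      = ((M:ℤ) - 1) * (((Fintype.card N : ℤ) + 1) * ((M:ℤ) - 1) - ((M:ℤ) + 1))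
        + ((Fintype.card N : ℤ) + 1)
          * ((d:ℤ) - (if c ∈ fringeSet fr then 1 else 0)) := by
  have hMB : (pdomeBase P t mid).card = M := by
    have := card_base st; omega
  have hcerase : (((pdomeBase P t mid).erase c).card : ℤ) = (M : ℤ) - 1 := by
    rw [Finset.cast_card_erase_of_mem hc, hMB]
  have hstep : ∀ b ∈ (pdomeBase P t mid).erase c,
      fval G P b = (((Fintype.card N : ℤ) + 1) * ((M:ℤ) - 1) - ((M:ℤ) + 1))
        + (if b ∈ fringeSet fr then (Fintype.card N : ℤ) + 1 else 0) :=
    fun b hb => fval_P_base st hclosed hM (Finset.mem_of_mem_erase hb)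
  rw [Finset.sum_congr rfl hstep, Finset.sum_add_distrib, Finset.sum_const,
    ← Finset.sum_filter, filter_fringe_erase st hc, Finset.sum_const, nsmul_eq_mul,
    nsmul_eq_mul, hcerase]
  by_cases hcf : c ∈ fringeSet fr
  · have hd1 : 1 ≤ d := by
      rw [← card_fringeSet st]
      exact Finset.card_pos.mpr ⟨c, hcf⟩
    rw [if_pos hcf, Finset.card_erase_of_mem hcf, card_fringeSet st]
    have hcast : ((d - 1 : ℕ) : ℤ) = (d : ℤ) - 1 := by omega
    rw [hcast]
    ring
  · rw [if_neg hcf, Finset.erase_eq_of_notMem hcf, card_fringeSet st]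
    ring

end MyAux4

lemma arith_stage_a (n d M s m μ φ : ℤ) (hn : 3*M ≤ n) (hd2 : 2 ≤ d) (hdM : d + 4 ≤ M)
    (hM8 : 8 ≤ M) (hs : M - 2 ≤ s) (hsM : s ≤ M) (hφd : φ ≤ d) (hφ0 : 0 ≤ φ)
    (hμ0 : 0 ≤ μ) (hμ1 : μ ≤ 1) (hm : 1 ≤ m)
    (hkey : ((M-1)*((n+1)*(M-1)-(M+1)) + (n+1)*d) * (s-1)
      ≤ ((s-1)*((n+1)*(s-1) - m + 1) + (n+1)*μ*φ) * (M-1)) : s = M := by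
  by_contra hne
  have hsM1 : s ≤ M - 1 := by omega
  have hn1 : (0:ℤ) ≤ n + 1 := by linarith
  have hμφ : μ*φ ≤ d := by nlinarith [mul_le_mul hμ1 hφd hφ0 (by linarith : (0:ℤ) ≤ 1)]
  have h1 : (n+1)*μ*φ ≤ (n+1)*d := by
    have := mul_le_mul_of_nonneg_left hμφ hn1
    nlinarith [this]
  have hs1 : (0:ℤ) ≤ s - 1 := by omega
  have h2 : (s-1)*((n+1)*(s-1) - m + 1) ≤ (s-1)*((n+1)*(s-1)) := by
    have : (n+1)*(s-1) - m + 1 ≤ (n+1)*(s-1) := by omega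
    exact mul_le_mul_of_nonneg_left this hs1
  have hkey2 : ((M-1)*((n+1)*(M-1)-(M+1)) + (n+1)*d) * (s-1)
      ≤ ((s-1)*((n+1)*(s-1)) + (n+1)*d) * (M-1) := by nlinarith
  have hkey3 : (n+1)*((M-s)*((s-1)*(M-1)-d)) ≤ (s-1)*((M-1)*(M+1)) := by nlinarith [hkey2]
  have hpos : 0 ≤ (M-3)*(M-1) - d := by nlinarith
  have hq : (M-3)*(M-1) - d ≤ (M-s)*((s-1)*(M-1)-d) := by
    have e1 : (1:ℤ) ≤ M - s := by omega
    have e2 : (M-3)*(M-1) - d ≤ (s-1)*(M-1) - d := by nlinarith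
    nlinarith [mul_le_mul e1 e2 hpos (by omega : (0:ℤ) ≤ M - s)]
  have hfin : (n+1)*((M-3)*(M-1)-d) ≤ (s-1)*((M-1)*(M+1)) :=
    le_trans (mul_le_mul_of_nonneg_left hq hn1) hkey3
  nlinarith [hfin]

lemma arith_stage_b (n d M m μ : ℤ) (hn : 3*M ≤ n) (hd2 : 2 ≤ d) (hdM : d + 4 ≤ M)
    (hM8 : 8 ≤ M) (hμ0 : 0 ≤ μ) (hμ1 : μ ≤ 1) (hm : M ≤ m)
    (hkey : ((M-1)*((n+1)*(M-1)-(M+1)) + (n+1)*d) * (M-1)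
      ≤ ((M-1)*((n+1)*(M-1) - m + 1) + (n+1)*μ*d) * (M-1)) : μ = 1 ∧ m ≤ M + 2 := by
  have hM1 : (0:ℤ) < M - 1 := by omega
  have hkey2 : (M-1)*((n+1)*(M-1)-(M+1)) + (n+1)*d
      ≤ (M-1)*((n+1)*(M-1) - m + 1) + (n+1)*μ*d :=
    le_of_mul_le_mul_right hkey hM1
  have hkey3 : (n+1)*d*(1-μ) ≤ (M-1)*(M + 2 - m) := by nlinarith [hkey2]
  have hn1 : (0:ℤ) ≤ n + 1 := by linarith
  have hnd0 : (0:ℤ) ≤ (n+1)*d := mul_nonneg hn1 (by omega)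
  have hμ : μ = 1 := by
    by_contra hne
    have hμ0' : μ ≤ 0 := by omega
    have ha : (n+1)*d*1 ≤ (n+1)*d*(1-μ) :=
      mul_le_mul_of_nonneg_left (by omega : (1:ℤ) ≤ 1-μ) hnd0
    have hb : (M-1)*(M+2-m) ≤ (M-1)*2 :=
      mul_le_mul_of_nonneg_left (by omega : M+2-m ≤ 2) (by omega : (0:ℤ) ≤ M-1)
    have hc : (n+1)*2 ≤ (n+1)*d := mul_le_mul_of_nonneg_left hd2 hn1
    linarith
  refine ⟨hμ, ?_⟩
  subst hμ
  by_contra hmm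
  have hm3 : M + 3 ≤ m := by omega
  have ha : (M-1)*(M+2-m) ≤ (M-1)*(-1) :=
    mul_le_mul_of_nonneg_left (by omega : M+2-m ≤ -1) (by omega : (0:ℤ) ≤ M-1)
  nlinarith [hkey3, ha]

lemma arith_stage1_nonfr (n d M : ℤ) (hn : 3*M ≤ n) (hd2 : 2 ≤ d) (hM8 : 8 ≤ M) :
    n*(M-3) * (M-1) < (M-1)*((n+1)*(M-1)-(M+1)) + (n+1)*d := by nlinarith

lemma arith_stage1_fr (n d M : ℤ) (hn : 3*M ≤ n) (hd2 : 2 ≤ d) (hM8 : 8 ≤ M) :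
    n*(M-3) * M < (M-1)*((n+1)*(M-1)-(M+1)) + (n+1)*(d-1) + ((n+1)*(d+1) - (M+1)) := by
  nlinarith

lemma arith_nomid_pos (n d M : ℤ) (hn : 3*M ≤ n) (hd2 : 2 ≤ d) (hM8 : 8 ≤ M) (hdM : d + 4 ≤ M) :
    0 < (n - M) + d*((n+1)*M - (M+1)) := by
  have h1 : (0:ℤ) ≤ (n+1)*M - (M+1) := by nlinarith
  have h2 : (0:ℤ) ≤ d*((n+1)*M - (M+1)) := mul_nonneg (by omega) h1
  linarith

lemma arith_nomid (n d M q : ℤ) (hn : 3*M ≤ n) (hd2 : 2 ≤ d) (hM8 : 8 ≤ M) (hdM : d + 4 ≤ M)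
    (hq : q ≤ 4) (hq0 : 0 ≤ q) (h : (n - M) + d*((n+1)*M - (M+1)) ≤ n*q*(d+1)) : False := by
  have hn0 : (0:ℤ) ≤ n := by linarith
  have h1 : n*q*(d+1) ≤ n*4*(d+1) := by
    have := mul_le_mul_of_nonneg_left hq hn0
    exact mul_le_mul_of_nonneg_right this (by omega : (0:ℤ) ≤ d+1)
  have h2 : (1:ℤ) ≤ d*M - 4*d - 3 := by nlinarith [mul_le_mul hd2 (by omega : (2:ℤ) ≤ M - 4) (by omega : (0:ℤ) ≤ 2) (by omega : (0:ℤ) ≤ d)]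
  have h3 : n*1 ≤ n*(d*M - 4*d - 3) := mul_le_mul_of_nonneg_left h2 hn0
  nlinarith [h1, h3]

lemma arith_stepB (n K db A B2 : ℤ) (hn : 3*(K-1) ≤ n) (hK : 36 ≤ K) (hdb : 2 ≤ db)
    (hprod : n*2 ≤ n*db) (hA : A ≤ n*2) (hB : B2 ≤ n*3)
    (hZ : ((n+1)*(db+1) - (K - db)) * 2 ≤ A + B2) : False := by nlinarith
section MyAux5

variable {N : Type*} [Fintype N] [DecidableEq N]
variable {G : SimpleGraph N} {d k' M : ℕ} {P : Finset N} {t mid : N} {fr : Fin d → N}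

set_option maxHeartbeats 1000000 in
/-- No blocking coalition contains a base player of a gadget. -/
lemma no_base_gadget (w : ℚ) (Γ : CoalitionStructure N) (C : Finset N)
    (hC : Blocks (utilAvgAL G w) Γ C)
    (hw : (Fintype.card N : ℚ) ^ 4 ≤ w)
    (st : IsPinchedDomeGadget G d k' P t mid fr)
    (hM : P.card = M + 2) (hd2 : 2 ≤ d) (hdM : d + 4 ≤ M) (hM8 : 8 ≤ M)
    (hn3 : 3 * M ≤ Fintype.card N)
    (hclosed : ∀ i ∈ P, i ≠ t → ∀ z, G.Adj i z → z ∈ P)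
    (hpart : ∀ i ∈ P, Γ.part i = P) :
    ∀ b ∈ pdomeBase P t mid, b ∉ C := by
  set n : ℕ := Fintype.card N with hndef
  have hn2 : 2 ≤ n := by omega
  intro b0 hb0 hb0C
  set B := pdomeBase P t mid with hBdef
  set frS := fringeSet fr with hfrdef
  have hMB : B.card = M := by
    have h := card_base st
    rw [← hBdef] at h
    omega
  have hfrB : frS ⊆ B := fringe_subset st
  have hBP : B ⊆ P := base_subset
  have hmB : mid ∉ B := mid_not_base
  have htB : t ∉ B := top_not_base
  have hPB : P ∩ B = B := Finset.inter_eq_right.mpr hBP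
  have hPm : P ∩ ({mid} : Finset N) = {mid} :=
    Finset.inter_eq_right.mpr (Finset.singleton_subset_iff.mpr st.mid_mem)
  set S := C ∩ B with hSdef
  have hSB : S ⊆ B := Finset.inter_subset_right
  have hSC : S ⊆ C := Finset.inter_subset_left
  have hmS : mid ∉ S := fun h => hmB (hSB h)
  have hb0S : b0 ∈ S := Finset.mem_inter.mpr ⟨hb0C, hb0⟩
  set s := S.card with hsdef
  set μ := (C ∩ ({mid} : Finset N)).card with hμdef
  have hs1 : 1 ≤ s := Finset.card_pos.mpr ⟨b0, hb0S⟩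
  have hμ1 : μ ≤ 1 := by
    have h1 : C ∩ ({mid} : Finset N) ⊆ {mid} := Finset.inter_subset_right
    have := Finset.card_le_card h1
    simpa using this
  have hsM : s ≤ M := hMB ▸ Finset.card_le_card hSB
  -- friends of a base player inside C
  have hFCsub : ∀ b ∈ S, friendsIn G C b ⊆ (S.erase b) ∪ (C ∩ ({mid} : Finset N)) := by
    intro b hb z hz
    rcases mem_friendsIn.mp hz with ⟨hzC, hadj⟩
    rcases (adj_base_iff st hclosed (hSB hb) z).mp hadj with ⟨hzB, hzb⟩ | ⟨hzm, _⟩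
    · exact Finset.mem_union_left _
        (Finset.mem_erase.mpr ⟨hzb, Finset.mem_inter.mpr ⟨hzC, hzB⟩⟩)
    · exact Finset.mem_union_right _
        (Finset.mem_inter.mpr ⟨hzC, Finset.mem_singleton.mpr hzm⟩)
  have hcardFC : ∀ b ∈ S, (friendsIn G C b).card ≤ s - 1 + μ := by
    intro b hb
    calc (friendsIn G C b).card ≤ ((S.erase b) ∪ (C ∩ {mid})).card :=
          Finset.card_le_card (hFCsub b hb)
      _ ≤ (S.erase b).card + μ := Finset.card_union_le _ _
      _ = s - 1 + μ := by rw [Finset.card_erase_of_mem hb]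
  have hcardFmid : (friendsIn G C mid).card ≤ d + 1 := by
    have h1 : friendsIn G C mid ⊆ insert t frS := by
      rw [friendsIn_mid st hclosed C]
      exact Finset.inter_subset_right
    calc (friendsIn G C mid).card ≤ (insert t frS).card := Finset.card_le_card h1
      _ ≤ frS.card + 1 := Finset.card_insert_le _ _
      _ = d + 1 := by rw [hfrdef, card_fringeSet st]
  have hmono : ∀ c ∈ S, aterm G P c ≤ aterm G C c := by
    intro c hc
    have h := hC.2 c (hSC hc)
    rw [hpart c (hBP (hSB hc))] at h
    exact aterm_mono hw hn2 h
  -- casts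
  have hn3' : 3 * (M:ℤ) ≤ (n:ℤ) := by exact_mod_cast hn3
  have hd2' : (2:ℤ) ≤ (d:ℤ) := by exact_mod_cast hd2
  have hdM' : (d:ℤ) + 4 ≤ (M:ℤ) := by exact_mod_cast hdM
  have hM8' : (8:ℤ) ≤ (M:ℤ) := by exact_mod_cast hM8
  -- ===== Stage 1 : s ≥ M - 2 =====
  have hstage1 : M ≤ s + 2 := by
    by_contra hcon
    have hs3 : s + 3 ≤ M := by omega
    have hβ0 : (0:ℤ) ≤ (n:ℤ) * ((M:ℤ) - 3) :=
      mul_nonneg (Int.ofNat_nonneg _) (by omega : (0:ℤ) ≤ (M:ℤ) - 3)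
    have hbnd : ∀ b ∈ friendsIn G C b0, fval G C b ≤ (n:ℤ) * ((M:ℤ) - 3) := by
      intro b hbF
      have hcardb : ((friendsIn G C b).card : ℤ) ≤ (M:ℤ) - 3 := by
        rcases Finset.mem_union.mp (hFCsub b0 hb0S hbF) with hb | hb
        · have hbS : b ∈ S := Finset.mem_of_mem_erase hb
          have := hcardFC b hbS
          omega
        · have hbmid : b = mid := by
            rcases Finset.mem_inter.mp hb with ⟨_, h⟩
            exact Finset.mem_singleton.mp h
          subst hbmid
          have := hcardFmid
          omega
      calc fval G C b ≤ (n:ℤ) * (friendsIn G C b).card := fval_le_mul G C b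
        _ ≤ (n:ℤ) * ((M:ℤ) - 3) :=
            mul_le_mul_of_nonneg_left hcardb (Int.ofNat_nonneg _)
    have hub := aterm_le_bound hβ0 hbnd
    -- lower bound for the Γ-side average
    have hlb : ((n:ℚ) * ((M:ℚ) - 3)) < aterm G P b0 := by
      by_cases hb0f : b0 ∈ frS
      · -- fringe case
        have hFP : friendsIn G P b0 = (B.erase b0) ∪ ({mid} : Finset N) := by
          rw [friendsIn_fringe st hclosed hb0f P, hPB, hPm]
        have hdisj : Disjoint (B.erase b0) ({mid} : Finset N) :=
          Finset.disjoint_singleton_right.mpr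
            (fun h => hmB (Finset.mem_of_mem_erase h))
        have hcardF : (((B.erase b0) ∪ ({mid} : Finset N)).card : ℚ) = (M:ℚ) := by
          rw [Finset.card_union_of_disjoint hdisj, Finset.card_singleton,
            Finset.card_erase_of_mem hb0, hMB]
          have : 1 ≤ M := by omega
          push_cast [Nat.cast_sub this]
          ring
        have hne : ((B.erase b0) ∪ ({mid} : Finset N)).Nonempty :=
          ⟨mid, Finset.mem_union_right _ (Finset.mem_singleton_self mid)⟩
        have hsum : ∑ b ∈ (B.erase b0) ∪ ({mid} : Finset N), fval G P b
            = ((M:ℤ)-1)*(((n:ℤ)+1)*((M:ℤ)-1) - ((M:ℤ)+1)) + ((n:ℤ)+1)*((d:ℤ)-1)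
              + (((n:ℤ)+1)*((d:ℤ)+1) - ((M:ℤ)+1)) := by
          rw [Finset.sum_union hdisj, Finset.sum_singleton,
            sum_fval_P_erase st hclosed hM hb0, if_pos hb0f,
            fval_P_mid st hclosed hM]
        rw [aterm_eq hFP hne, hcardF, hsum]
        rw [lt_div_iff₀ (by exact_mod_cast (by omega : 0 < M))]
        exact_mod_cast arith_stage1_fr (n:ℤ) d M hn3' hd2' hM8'
      · -- non-fringe case
        have hFP : friendsIn G P b0 = B.erase b0 := by
          rw [friendsIn_base st hclosed hb0 hb0f P, hPB]
        have hcardF : ((B.erase b0).card : ℚ) = (M:ℚ) - 1 := by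
          rw [Finset.cast_card_erase_of_mem hb0, hMB]
        have hne : (B.erase b0).Nonempty := by
          rw [← Finset.card_pos, Finset.card_erase_of_mem hb0, hMB]
          omega
        have hsum : ∑ b ∈ B.erase b0, fval G P b
            = ((M:ℤ)-1)*(((n:ℤ)+1)*((M:ℤ)-1) - ((M:ℤ)+1)) + ((n:ℤ)+1)*(d:ℤ) := by
          rw [sum_fval_P_erase st hclosed hM hb0, if_neg hb0f]
          ring
        rw [aterm_eq hFP hne, hcardF, hsum]
        rw [lt_div_iff₀ (by
          have : (0:ℚ) < (M:ℚ) - 1 := by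
            have : (1:ℚ) < (M:ℚ) := by exact_mod_cast (by omega : 1 < M)
            linarith
          exact this)]
        exact_mod_cast arith_stage1_nonfr (n:ℤ) d M hn3' hd2' hM8'
    have hm0 := hmono b0 hb0S
    push_cast at hub
    linarith
  -- ===== Stage 1.5 : a non-fringe player of S =====
  have hex : ∃ c0 ∈ S, c0 ∉ frS := by
    by_contra hcon
    push_neg at hcon
    have hsub : S ⊆ frS := fun c hc => hcon c hc
    have := Finset.card_le_card hsub
    rw [hfrdef, card_fringeSet st] at this
    omega
  obtain ⟨c0, hc0S, hc0f⟩ := hex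
  have hc0B : c0 ∈ B := hSB hc0S
  have hc0C : c0 ∈ C := hSC hc0S
  -- ===== Stage 2 : exact inequality for c0 =====
  set φ := (S ∩ frS).card with hφdef
  have hfrcard : frS.card = d := by rw [hfrdef]; exact card_fringeSet st
  have hφd : φ ≤ d := by
    have h1 : S ∩ frS ⊆ frS := Finset.inter_subset_right
    have h2 := Finset.card_le_card h1
    omega
  have hfvalC : ∀ b ∈ S, fval G C b
      = ((n:ℤ)+1)*((s:ℤ)-1) - (C.card:ℤ) + 1
        + (if b ∈ frS then ((n:ℤ)+1)*(μ:ℤ) else 0) := by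
    intro b hb
    have hbC : b ∈ C := hSC hb
    by_cases hbf : b ∈ frS
    · rw [fval_eq, friendsIn_fringe st hclosed hbf C, if_pos hbC, if_pos hbf]
      have hdisj : Disjoint (S.erase b) (C ∩ ({mid} : Finset N)) := by
        rw [Finset.disjoint_right]
        intro a ha ha2
        rcases Finset.mem_inter.mp ha with ⟨_, h⟩
        rw [Finset.mem_singleton.mp h] at ha2
        exact hmS (Finset.mem_of_mem_erase ha2)
      rw [show C ∩ B = S from rfl, Finset.card_union_of_disjoint hdisj]
      push_cast
      rw [Finset.cast_card_erase_of_mem hb]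
      push_cast
      ring
    · rw [fval_eq, friendsIn_base st hclosed (hSB hb) hbf C, if_pos hbC, if_neg hbf]
      rw [show C ∩ B = S from rfl]
      rw [Finset.cast_card_erase_of_mem hb]
      push_cast
      ring
  have hFC0 : friendsIn G C c0 = S.erase c0 := by
    rw [friendsIn_base st hclosed hc0B hc0f C]
  have hsumC : ∑ b ∈ S.erase c0, fval G C b
      = ((s:ℤ)-1)*(((n:ℤ)+1)*((s:ℤ)-1) - (C.card:ℤ) + 1)
        + ((n:ℤ)+1)*(μ:ℤ)*(φ:ℤ) := by
    have hstep : ∀ b ∈ S.erase c0, fval G C b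
        = (((n:ℤ)+1)*((s:ℤ)-1) - (C.card:ℤ) + 1)
          + (if b ∈ frS then ((n:ℤ)+1)*(μ:ℤ) else 0) :=
      fun b hb => hfvalC b (Finset.mem_of_mem_erase hb)
    have hfilter : (S.erase c0).filter (· ∈ frS) = S ∩ frS := by
      ext z
      simp only [Finset.mem_filter, Finset.mem_erase, Finset.mem_inter]
      constructor
      · rintro ⟨⟨_, hzS⟩, hzf⟩
        exact ⟨hzS, hzf⟩
      · rintro ⟨hzS, hzf⟩
        exact ⟨⟨fun h => hc0f (h ▸ hzf), hzS⟩, hzf⟩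
    rw [Finset.sum_congr rfl hstep, Finset.sum_add_distrib, Finset.sum_const,
      ← Finset.sum_filter, hfilter, Finset.sum_const, nsmul_eq_mul, nsmul_eq_mul,
      Finset.cast_card_erase_of_mem hc0S]
    push_cast
    ring
  have hcardC0 : ((S.erase c0).card : ℚ) = (s:ℚ) - 1 := by
    rw [Finset.cast_card_erase_of_mem hc0S]
  have hneC0 : (S.erase c0).Nonempty := by
    rw [← Finset.card_pos, Finset.card_erase_of_mem hc0S]
    omega
  have hFP0 : friendsIn G P c0 = B.erase c0 := by
    rw [friendsIn_base st hclosed hc0B hc0f P, hPB]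
  have hcardP0 : ((B.erase c0).card : ℚ) = (M:ℚ) - 1 := by
    rw [Finset.cast_card_erase_of_mem hc0B, hMB]
  have hneP0 : (B.erase c0).Nonempty := by
    rw [← Finset.card_pos, Finset.card_erase_of_mem hc0B, hMB]
    omega
  have hsumP : ∑ b ∈ B.erase c0, fval G P b
      = ((M:ℤ)-1)*(((n:ℤ)+1)*((M:ℤ)-1) - ((M:ℤ)+1)) + ((n:ℤ)+1)*(d:ℤ) := by
    rw [sum_fval_P_erase st hclosed hM hc0B, if_neg hc0f]
    ring
  have hkeyZ : (((M:ℤ)-1)*(((n:ℤ)+1)*((M:ℤ)-1) - ((M:ℤ)+1)) + ((n:ℤ)+1)*(d:ℤ))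
        * ((s:ℤ)-1)
      ≤ (((s:ℤ)-1)*(((n:ℤ)+1)*((s:ℤ)-1) - (C.card:ℤ) + 1) + ((n:ℤ)+1)*(μ:ℤ)*(φ:ℤ))
        * ((M:ℤ)-1) := by
    have h := hmono c0 hc0S
    rw [aterm_eq hFP0 hneP0, aterm_eq hFC0 hneC0, hcardP0, hcardC0, hsumP, hsumC] at h
    have hp1 : (0:ℚ) < (M:ℚ) - 1 := by
      have : (1:ℚ) < (M:ℚ) := by exact_mod_cast (by omega : 1 < M)
      linarith
    have hp2 : (0:ℚ) < (s:ℚ) - 1 := by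
      have : (1:ℚ) < (s:ℚ) := by exact_mod_cast (by omega : 1 < s)
      linarith
    rw [div_le_div_iff₀ hp1 hp2] at h
    exact_mod_cast h
  -- stage a : s = M
  have hmlb1 : (1:ℤ) ≤ (C.card : ℤ) := by
    exact_mod_cast Finset.card_pos.mpr ⟨c0, hc0C⟩
  have hsZ : (s:ℤ) = (M:ℤ) :=
    arith_stage_a (n:ℤ) d M s (C.card) μ φ hn3' hd2' hdM' hM8'
      (by exact_mod_cast (by omega : (M:ℤ) - 2 ≤ (s:ℤ)))
      (by exact_mod_cast hsM)
      (by exact_mod_cast hφd) (Int.ofNat_nonneg _) (Int.ofNat_nonneg _)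
      (by exact_mod_cast hμ1) hmlb1 hkeyZ
  have hsM' : s = M := by exact_mod_cast hsZ
  have hSeqB : S = B := Finset.eq_of_subset_of_card_le hSB (by omega)
  have hφd' : φ = d := by
    rw [hφdef, hSeqB, Finset.inter_eq_right.mpr hfrB, hfrdef, card_fringeSet st]
  -- stage b : mid ∈ C and |C| ≤ M + 2
  have hmM : (M:ℤ) ≤ (C.card : ℤ) := by
    have : M ≤ C.card := hsM' ▸ (hsdef ▸ Finset.card_le_card hSC)
    exact_mod_cast this
  have hstb : (μ:ℤ) = 1 ∧ (C.card:ℤ) ≤ (M:ℤ) + 2 := by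
    apply arith_stage_b (n:ℤ) d M (C.card) μ hn3' hd2' hdM' hM8'
      (Int.ofNat_nonneg _) (by exact_mod_cast hμ1) hmM
    have hthis := hkeyZ
    rw [hsZ, hφd'] at hthis
    exact hthis
  obtain ⟨hμZ, hmubZ⟩ := hstb
  have hμeq : μ = 1 := by exact_mod_cast hμZ
  have hmidC : mid ∈ C := by
    by_contra hmid
    have hempty : C ∩ ({mid} : Finset N) = ∅ := by
      apply Finset.eq_empty_iff_forall_notMem.mpr
      intro a ha
      rcases Finset.mem_inter.mp ha with ⟨haC, ham⟩
      rw [Finset.mem_singleton.mp ham] at haC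
      exact hmid haC
    rw [hμdef, hempty] at hμeq
    simp at hμeq
  have hBC : B ⊆ C := by rw [← hSeqB]; exact hSC
  have hCB : C ∩ B = B := by rw [← hSdef, hSeqB]
  have hCm : C ∩ ({mid} : Finset N) = {mid} := Finset.inter_singleton_of_mem hmidC
  have hsub2 : insert mid B ⊆ C := Finset.insert_subset hmidC hBC
  have hcardins : (insert mid B).card = M + 1 := by
    rw [Finset.card_insert_of_notMem hmB, hMB]
  have hmlb : M + 1 ≤ C.card := hcardins ▸ Finset.card_le_card hsub2
  have hmub : C.card ≤ M + 2 := by exact_mod_cast hmubZ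
  rcases (by omega : C.card = M + 1 ∨ C.card = M + 2) with hm | hm
  · -- C = insert mid B : a fringe player strictly prefers P
    have hCeq : C = insert mid B :=
      (Finset.eq_of_subset_of_card_le hsub2 (by omega)).symm
    have htC : t ∉ C := by
      rw [hCeq]
      simp only [Finset.mem_insert]
      rintro (h | h)
      · exact st.mid_ne_top h.symm
      · exact htB h
    have hd0 : 0 < d := by omega
    have hf0fr : fr ⟨0, hd0⟩ ∈ frS := by
      rw [hfrdef]
      exact Finset.mem_image_of_mem fr (Finset.mem_univ _)
    set f0 := fr ⟨0, hd0⟩ with hf0def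
    have hf0B : f0 ∈ B := hfrB hf0fr
    have hf0S : f0 ∈ S := by rw [hSeqB]; exact hf0B
    have hf0C : f0 ∈ C := hSC hf0S
    have hdisj0 : Disjoint (B.erase f0) ({mid} : Finset N) :=
      Finset.disjoint_singleton_right.mpr (fun h => hmB (Finset.mem_of_mem_erase h))
    have hFCf : friendsIn G C f0 = (B.erase f0) ∪ ({mid} : Finset N) := by
      rw [friendsIn_fringe st hclosed hf0fr C, hCB, hCm]
    have hFPf : friendsIn G P f0 = (B.erase f0) ∪ ({mid} : Finset N) := by
      rw [friendsIn_fringe st hclosed hf0fr P, hPB, hPm]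
    have hcardF : (((B.erase f0) ∪ ({mid} : Finset N)).card : ℚ) = (M:ℚ) := by
      rw [Finset.card_union_of_disjoint hdisj0, Finset.card_singleton,
        Finset.card_erase_of_mem hf0B, hMB]
      have h1 : 1 ≤ M := by omega
      push_cast [Nat.cast_sub h1]
      ring
    have hneF : ((B.erase f0) ∪ ({mid} : Finset N)).Nonempty :=
      ⟨mid, Finset.mem_union_right _ (Finset.mem_singleton_self mid)⟩
    have hfmidC : fval G C mid = ((n:ℤ)+1)*(d:ℤ) - (M:ℤ) := by
      have hfm : friendsIn G C mid = frS := by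
        rw [friendsIn_mid st hclosed C]
        ext z
        simp only [Finset.mem_inter, Finset.mem_insert]
        constructor
        · rintro ⟨hzC, rfl | hzf⟩
          · exact absurd hzC htC
          · exact hzf
        · intro hzf
          exact ⟨hBC (hfrB hzf), Or.inr hzf⟩
      rw [fval_eq, hfm, hfrcard, if_pos hmidC, hm]
      push_cast
      ring
    have hsumCf : ∑ b ∈ (B.erase f0) ∪ ({mid} : Finset N), fval G C b
        = ((M:ℤ)-1)*(((n:ℤ)+1)*((M:ℤ)-1) - ((M:ℤ)+1) + 1) + ((n:ℤ)+1)*((d:ℤ)-1)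
          + (((n:ℤ)+1)*(d:ℤ) - (M:ℤ)) := by
      rw [Finset.sum_union hdisj0, Finset.sum_singleton, hfmidC]
      have hstep : ∀ b ∈ B.erase f0, fval G C b
          = (((n:ℤ)+1)*((M:ℤ)-1) - ((M:ℤ)+1) + 1)
            + (if b ∈ frS then ((n:ℤ)+1) else 0) := by
        intro b hb
        have hbS : b ∈ S := by rw [hSeqB]; exact Finset.mem_of_mem_erase hb
        rw [hfvalC b hbS, hsM', hm, hμeq]
        split_ifs with h
        · push_cast; ring
        · push_cast; ring
      rw [Finset.sum_congr rfl hstep, Finset.sum_add_distrib, Finset.sum_const,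
        ← Finset.sum_filter, filter_fringe_erase st hf0B, Finset.sum_const,
        nsmul_eq_mul, nsmul_eq_mul, Finset.cast_card_erase_of_mem hf0B]
      rw [Finset.card_erase_of_mem hf0fr, hfrcard, hMB]
      have hd1 : ((d - 1 : ℕ) : ℤ) = (d:ℤ) - 1 := by omega
      rw [hd1]
      ring
    have hsumPf : ∑ b ∈ (B.erase f0) ∪ ({mid} : Finset N), fval G P b
        = ((M:ℤ)-1)*(((n:ℤ)+1)*((M:ℤ)-1) - ((M:ℤ)+1)) + ((n:ℤ)+1)*((d:ℤ)-1)
          + (((n:ℤ)+1)*((d:ℤ)+1) - ((M:ℤ)+1)) := by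
      rw [Finset.sum_union hdisj0, Finset.sum_singleton,
        sum_fval_P_erase st hclosed hM hf0B, if_pos hf0fr, fval_P_mid st hclosed hM]
    have hmono' := hmono f0 hf0S
    rw [aterm_eq hFPf hneF, aterm_eq hFCf hneF, hcardF, hsumCf, hsumPf] at hmono'
    have hMpos : (0:ℚ) < (M:ℚ) := by exact_mod_cast (by omega : 0 < M)
    rw [div_le_div_iff₀ hMpos hMpos] at hmono'
    have hZ : (((M:ℤ)-1)*(((n:ℤ)+1)*((M:ℤ)-1) - ((M:ℤ)+1)) + ((n:ℤ)+1)*((d:ℤ)-1)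
          + (((n:ℤ)+1)*((d:ℤ)+1) - ((M:ℤ)+1))) * (M:ℤ)
        ≤ (((M:ℤ)-1)*(((n:ℤ)+1)*((M:ℤ)-1) - ((M:ℤ)+1) + 1) + ((n:ℤ)+1)*((d:ℤ)-1)
          + (((n:ℤ)+1)*(d:ℤ) - (M:ℤ))) * (M:ℤ) := by exact_mod_cast hmono'
    have hMpZ : (0:ℤ) < (M:ℤ) := by
      have : 0 < M := by omega
      exact_mod_cast this
    have hring : (((M:ℤ)-1)*(((n:ℤ)+1)*((M:ℤ)-1) - ((M:ℤ)+1) + 1) + ((n:ℤ)+1)*((d:ℤ)-1)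
          + (((n:ℤ)+1)*(d:ℤ) - (M:ℤ)))
        = (((M:ℤ)-1)*(((n:ℤ)+1)*((M:ℤ)-1) - ((M:ℤ)+1)) + ((n:ℤ)+1)*((d:ℤ)-1)
          + (((n:ℤ)+1)*((d:ℤ)+1) - ((M:ℤ)+1))) + ((M:ℤ) - 1 - (n:ℤ)) := by ring
    rw [hring, add_mul] at hZ
    have hneg : ((M:ℤ) - 1 - (n:ℤ)) * (M:ℤ) < 0 :=
      mul_neg_of_neg_of_pos (by linarith) hMpZ
    linarith
  · -- |C| = M + 2 : c0 is indifferent between C and P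
    have hfveq : ∀ b ∈ B, fval G C b = fval G P b := by
      intro b hbB
      by_cases hbf : b ∈ frS
      · rw [fval_eq, fval_eq, friendsIn_fringe st hclosed hbf C,
          friendsIn_fringe st hclosed hbf P, hCB, hPB, hCm, hPm, hm, hM,
          if_pos (hBC hbB), if_pos (hBP hbB)]
      · rw [fval_eq, fval_eq, friendsIn_base st hclosed hbB hbf C,
          friendsIn_base st hclosed hbB hbf P, hCB, hPB, hm, hM,
          if_pos (hBC hbB), if_pos (hBP hbB)]
    have hFCP : friendsIn G C c0 = friendsIn G P c0 := by
      rw [hFC0, hFP0, hSeqB]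
    have huleq : utilAvgAL G w C c0 = utilAvgAL G w P c0 := by
      rw [utilAvgAL_eq, utilAvgAL_eq, hfveq c0 hc0B]
      congr 1
      rw [aterm, aterm, hFCP, hFP0]
      split_ifs with h
      · have hsc : (∑ c ∈ (pdomeBase P t mid).erase c0, (fval G C c : ℚ))
            = ∑ c ∈ (pdomeBase P t mid).erase c0, (fval G P c : ℚ) :=
          Finset.sum_congr rfl
            (fun b hb => by rw [hfveq b (Finset.mem_of_mem_erase hb)])
        rw [hsc]
    have hblk := hC.2 c0 hc0C
    rw [hpart c0 (hBP hc0B), ← huleq] at hblk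
    exact absurd hblk (lt_irrefl _)

end MyAux5
section MyAux6

variable {N : Type*} [Fintype N] [DecidableEq N]
variable {G : SimpleGraph N} {d k' M : ℕ} {P : Finset N} {t mid : N} {fr : Fin d → N}

set_option maxHeartbeats 1000000 in
/-- No blocking coalition contains the mid player of a gadget whose top player
has at most 4 friends. -/
lemma no_mid_gadget (w : ℚ) (Γ : CoalitionStructure N) (C : Finset N)
    (hC : Blocks (utilAvgAL G w) Γ C)
    (hw : (Fintype.card N : ℚ) ^ 4 ≤ w)
    (st : IsPinchedDomeGadget G d k' P t mid fr)
    (hM : P.card = M + 2) (hd2 : 2 ≤ d) (hdM : d + 4 ≤ M) (hM8 : 8 ≤ M)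
    (hn3 : 3 * M ≤ Fintype.card N)
    (hclosed : ∀ i ∈ P, i ≠ t → ∀ z, G.Adj i z → z ∈ P)
    (hpart : ∀ i ∈ P, Γ.part i = P)
    (T : Finset N) (hT : ∀ z, G.Adj t z → z ∈ T) (hT4 : T.card ≤ 4) :
    mid ∉ C := by
  intro hmidC
  set n : ℕ := Fintype.card N with hndef
  have hn2 : 2 ≤ n := by omega
  have hn3' : 3 * (M:ℤ) ≤ (n:ℤ) := by exact_mod_cast hn3
  have hd2' : (2:ℤ) ≤ (d:ℤ) := by exact_mod_cast hd2
  have hdM' : (d:ℤ) + 4 ≤ (M:ℤ) := by exact_mod_cast hdM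
  have hM8' : (8:ℤ) ≤ (M:ℤ) := by exact_mod_cast hM8
  have hnb : ∀ b ∈ pdomeBase P t mid, b ∉ C :=
    no_base_gadget w Γ C hC hw st hM hd2 hdM hM8 hn3 hclosed hpart
  have hfr_not : ∀ f ∈ fringeSet fr, f ∉ C := fun f hf => hnb f (fringe_subset st hf)
  have h := hC.2 mid hmidC
  rw [hpart mid st.mid_mem] at h
  have hmono := aterm_mono hw hn2 h
  -- value of the Γ-side average
  have htf : t ∉ fringeSet fr := fun hx => top_not_base (fringe_subset st hx)
  have hsub : insert t (fringeSet fr) ⊆ P := by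
    intro z hz
    rcases Finset.mem_insert.mp hz with rfl | hz
    · exact st.top_mem
    · exact base_subset (fringe_subset st hz)
  have hFPm : friendsIn G P mid = insert t (fringeSet fr) := by
    rw [friendsIn_mid st hclosed P, Finset.inter_eq_right.mpr hsub]
  have hcards : ((insert t (fringeSet fr)).card : ℚ) = (d:ℚ) + 1 := by
    rw [Finset.card_insert_of_notMem htf, card_fringeSet st]
    push_cast
    ring
  have hsumP : ∑ b ∈ insert t (fringeSet fr), fval G P b
      = ((n:ℤ) - (M:ℤ)) + (d:ℤ)*(((n:ℤ)+1)*(M:ℤ) - ((M:ℤ)+1)) := by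
    rw [Finset.sum_insert htf, fval_P_top st hM]
    have hstep : ∀ f ∈ fringeSet fr, fval G P f = ((n:ℤ)+1)*(M:ℤ) - ((M:ℤ)+1) := by
      intro f hf
      rw [fval_P_base st hclosed hM (fringe_subset st hf), if_pos hf]
      ring
    rw [Finset.sum_congr rfl hstep, Finset.sum_const, card_fringeSet st, nsmul_eq_mul]
  have hneP : (insert t (fringeSet fr)).Nonempty := ⟨t, Finset.mem_insert_self _ _⟩
  have haP : aterm G P mid
      = ((((n:ℤ) - (M:ℤ)) + (d:ℤ)*(((n:ℤ)+1)*(M:ℤ) - ((M:ℤ)+1)) : ℤ) : ℚ)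
        / ((d:ℚ) + 1) := by
    rw [aterm_eq hFPm hneP, hcards, hsumP]
  have hd1pos : (0:ℚ) < (d:ℚ) + 1 := by positivity
  by_cases htC : t ∈ C
  · -- friends of mid in C: exactly the top
    have hFCm : friendsIn G C mid = {t} := by
      rw [friendsIn_mid st hclosed C]
      ext z
      simp only [Finset.mem_inter, Finset.mem_insert, Finset.mem_singleton]
      constructor
      · rintro ⟨hzC, rfl | hzf⟩
        · rfl
        · exact absurd hzC (hfr_not z hzf)
      · rintro rfl
        exact ⟨htC, Or.inl rfl⟩
    have haC : aterm G C mid = (fval G C t : ℚ) := by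
      rw [aterm_eq hFCm ⟨t, Finset.mem_singleton_self t⟩, Finset.sum_singleton,
        Finset.card_singleton]
      push_cast
      ring
    have hfb : fval G C t ≤ (n:ℤ) * 4 := by
      have hsubT : friendsIn G C t ⊆ T := by
        intro z hz
        exact hT z (mem_friendsIn.mp hz).2
      have hcard4 : ((friendsIn G C t).card : ℤ) ≤ 4 := by
        have := Finset.card_le_card hsubT
        omega
      calc fval G C t ≤ (n:ℤ) * (friendsIn G C t).card := fval_le_mul G C t
        _ ≤ (n:ℤ) * 4 := mul_le_mul_of_nonneg_left hcard4 (Int.ofNat_nonneg _)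
    rw [haP, haC] at hmono
    rw [div_le_iff₀ hd1pos] at hmono
    have hZ : ((n:ℤ) - (M:ℤ)) + (d:ℤ)*(((n:ℤ)+1)*(M:ℤ) - ((M:ℤ)+1))
        ≤ ((n:ℤ) * 4) * ((d:ℤ) + 1) := by
      have h2 : (fval G C t : ℚ) * ((d:ℚ) + 1) ≤ (((n:ℤ) * 4 : ℤ) : ℚ) * ((d:ℚ) + 1) := by
        apply mul_le_mul_of_nonneg_right _ (le_of_lt hd1pos)
        exact_mod_cast hfb
      have h3 := le_trans hmono h2
      exact_mod_cast h3
    exact arith_nomid (n:ℤ) d M 4 hn3' hd2' hM8' hdM' (le_refl 4) (by norm_num) hZ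
  · have hFCm : friendsIn G C mid = ∅ := by
      rw [friendsIn_mid st hclosed C]
      apply Finset.eq_empty_iff_forall_notMem.mpr
      intro z hz
      rcases Finset.mem_inter.mp hz with ⟨hzC, hzi⟩
      rcases Finset.mem_insert.mp hzi with rfl | hzf
      · exact htC hzC
      · exact hfr_not z hzf hzC
    rw [haP, aterm_empty hFCm] at hmono
    have hpos := arith_nomid_pos (n:ℤ) d M hn3' hd2' hM8' hdM'
    have hposQ : (0:ℚ) < ((((n:ℤ) - (M:ℤ)) + (d:ℤ)*(((n:ℤ)+1)*(M:ℤ) - ((M:ℤ)+1)) : ℤ) : ℚ) := by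
      exact_mod_cast hpos
    have := div_pos hposQ hd1pos
    linarith

end MyAux6

set_option maxHeartbeats 1600000 in
/-- Claim 4: in the avg-AL reduction instance, if a coalition `C` blocks `Γ` and the
edge player of an edge `e = xy` belongs to `C`, then `b_{x,e}, b_{y,e}, x', y' ∈ C`
and `|C| < k'`. -/
theorem avgAL_edge_player_in_blocking {V N : Type*} [Fintype V] [DecidableEq V]
    [Fintype N] [DecidableEq N]
    (H : SimpleGraph V) (k : ℕ) (hk : 3 ≤ k)
    (hsize : k < Fintype.card V + H.edgeFinset.card) (hdvd : 3 ∣ (k + 1))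
    (G : SimpleGraph N) (Pv : V → Finset N) (Pe : Sym2 V → Finset N)
    (Pve : V → Sym2 V → Finset N)
    (vp : V → N) (ep : Sym2 V → N) (bp : V → Sym2 V → N)
    (R : AvgALReduction H k G Pv Pe Pve vp ep bp)
    (w : ℚ) (hw : (Fintype.card N : ℚ) ^ 4 ≤ w)
    (Γ : CoalitionStructure N) (hΓ : IsAvgGamma H Pv Pe Pve Γ)
    (C : Finset N) (hC : Blocks (utilAvgAL G w) Γ C)
    (x y : V) (hxy : H.Adj x y) (he : ep s(x, y) ∈ C) :
    bp x s(x, y) ∈ C ∧ bp y s(x, y) ∈ C ∧ vp x ∈ C ∧ vp y ∈ C ∧ C.card < avgK' k := by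
  obtain ⟨hΓv, hΓe, hΓve⟩ := hΓ
  have hxyne : x ≠ y := hxy.ne
  have heE : s(x, y) ∈ H.edgeSet := H.mem_edgeSet.mpr hxy
  have hxe : x ∈ s(x, y) := Sym2.mem_mk_left x y
  have hye : y ∈ s(x, y) := Sym2.mem_mk_right x y
  obtain ⟨me, fre, ste⟩ := R.pdome_e s(x, y) heE
  obtain ⟨mx, frx, stx⟩ := R.pdome_ve x s(x, y) heE hxe
  obtain ⟨my, fry, sty⟩ := R.pdome_ve y s(x, y) heE hye
  -- membership of the top players in their gadgets
  have hvp_mem : ∀ v : V, vp v ∈ Pv v :=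
    fun v => ((R.pdome_v v).choose_spec.choose_spec).top_mem
  have hep_mem : ∀ e ∈ H.edgeSet, ep e ∈ Pe e :=
    fun e hee => ((R.pdome_e e hee).choose_spec.choose_spec).top_mem
  have hbp_mem : ∀ (v : V), ∀ e ∈ H.edgeSet, v ∈ e → bp v e ∈ Pve v e :=
    fun v e hee hv => ((R.pdome_ve v e hee hv).choose_spec.choose_spec).top_mem
  -- uniqueness of gadget membership
  have uvv : ∀ {v w' : V} {i : N}, i ∈ Pv v → i ∈ Pv w' → v = w' := by
    intro v w' i h1 h2
    by_contra hne
    exact Finset.disjoint_left.mp (R.disj_vv v w' hne) h1 h2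
  have uee : ∀ {e f : Sym2 V} {i : N}, e ∈ H.edgeSet → f ∈ H.edgeSet →
      i ∈ Pe e → i ∈ Pe f → e = f := by
    intro e f i hee hf h1 h2
    by_contra hne
    exact Finset.disjoint_left.mp (R.disj_ee e hee f hf hne) h1 h2
  have ubb : ∀ {v w' : V} {e f : Sym2 V} {i : N}, e ∈ H.edgeSet → v ∈ e →
      f ∈ H.edgeSet → w' ∈ f → i ∈ Pve v e → i ∈ Pve w' f → v = w' ∧ e = f := by
    intro v w' e f i hee hv hf hw h1 h2
    by_contra hne
    have hp : (v, e) ≠ (w', f) := by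
      intro hpe
      exact hne ⟨congrArg Prod.fst hpe, congrArg Prod.snd hpe⟩
    exact Finset.disjoint_left.mp (R.disj_bb v e hee hv w' f hf hw hp) h1 h2
  have uveE : ∀ {v : V} {e : Sym2 V} {i : N}, e ∈ H.edgeSet →
      i ∈ Pv v → i ∈ Pe e → False := by
    intro v e i hee h1 h2
    exact Finset.disjoint_left.mp (R.disj_v_e v e hee) h1 h2
  have uvb : ∀ {v w' : V} {f : Sym2 V} {i : N}, f ∈ H.edgeSet → w' ∈ f →
      i ∈ Pv v → i ∈ Pve w' f → False := by
    intro v w' f i hf hw h1 h2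
    exact Finset.disjoint_left.mp (R.disj_v_b v w' f hf hw) h1 h2
  have ueb : ∀ {e f : Sym2 V} {w' : V} {i : N}, e ∈ H.edgeSet → f ∈ H.edgeSet →
      w' ∈ f → i ∈ Pe e → i ∈ Pve w' f → False := by
    intro e f w' i hee hf hw h1 h2
    exact Finset.disjoint_left.mp (R.disj_e_b e hee w' f hf hw) h1 h2
  -- closure of the edge gadget
  have closedPe : ∀ i ∈ Pe s(x, y), i ≠ ep s(x, y) → ∀ z, G.Adj i z → z ∈ Pe s(x, y) := by
    intro i hiP hit z hadj
    rcases R.adj_cases i z hadj with ⟨v, h1, h2⟩ | ⟨f, hf, h1, h2⟩ | ⟨v, f, hf, hvf, h1, h2⟩ |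
      ⟨v, f, hf, hvf, hcs⟩ | ⟨v, f, hf, hvf, hcs⟩ | ⟨a, b, hab, hcs⟩
    · exact (uveE heE h1 hiP).elim
    · rwa [uee hf heE h1 hiP] at h2
    · exact (ueb heE hf hvf hiP h1).elim
    · rcases hcs with ⟨hi, _⟩ | ⟨_, hi⟩
      · rw [hi] at hiP
        exact (ueb heE hf hvf hiP (hbp_mem v f hf hvf)).elim
      · rw [hi] at hiP
        exact (uveE heE (hvp_mem v) hiP).elim
    · rcases hcs with ⟨hi, _⟩ | ⟨_, hi⟩
      · rw [hi] at hiP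
        exact (ueb heE hf hvf hiP (hbp_mem v f hf hvf)).elim
      · rw [hi] at hiP hit
        rw [uee hf heE (hep_mem f hf) hiP] at hit
        exact (hit rfl).elim
    · have habE : s(a, b) ∈ H.edgeSet := H.mem_edgeSet.mpr hab
      rcases hcs with ⟨hi, _⟩ | ⟨_, hi⟩
      · rw [hi] at hiP
        exact (ueb heE habE (Sym2.mem_mk_left a b) hiP
          (hbp_mem a s(a, b) habE (Sym2.mem_mk_left a b))).elim
      · rw [hi] at hiP
        exact (ueb heE habE (Sym2.mem_mk_right a b) hiP
          (hbp_mem b s(a, b) habE (Sym2.mem_mk_right a b))).elim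
  -- closure of the incidence gadgets
  have closedPve : ∀ (v : V), v ∈ s(x, y) → ∀ i ∈ Pve v s(x, y), i ≠ bp v s(x, y) →
      ∀ z, G.Adj i z → z ∈ Pve v s(x, y) := by
    intro v hv i hiP hit z hadj
    rcases R.adj_cases i z hadj with ⟨v', h1, h2⟩ | ⟨f, hf, h1, h2⟩ | ⟨v', f, hf, hvf, h1, h2⟩ |
      ⟨v', f, hf, hvf, hcs⟩ | ⟨v', f, hf, hvf, hcs⟩ | ⟨a, b, hab, hcs⟩
    · exact (uvb heE hv h1 hiP).elim
    · exact (ueb hf heE hv h1 hiP).elim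
    · obtain ⟨hv1, hf1⟩ := ubb hf hvf heE hv h1 hiP
      rw [hv1, hf1] at h2
      exact h2
    · rcases hcs with ⟨hi, _⟩ | ⟨_, hi⟩
      · rw [hi] at hiP hit
        obtain ⟨hv1, hf1⟩ := ubb hf hvf heE hv (hbp_mem v' f hf hvf) hiP
        rw [hv1, hf1] at hit
        exact (hit rfl).elim
      · rw [hi] at hiP
        exact (uvb heE hv (hvp_mem v') hiP).elim
    · rcases hcs with ⟨hi, _⟩ | ⟨_, hi⟩
      · rw [hi] at hiP hit
        obtain ⟨hv1, hf1⟩ := ubb hf hvf heE hv (hbp_mem v' f hf hvf) hiP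
        rw [hv1, hf1] at hit
        exact (hit rfl).elim
      · rw [hi] at hiP
        exact (ueb hf heE hv (hep_mem f hf) hiP).elim
    · have habE : s(a, b) ∈ H.edgeSet := H.mem_edgeSet.mpr hab
      rcases hcs with ⟨hi, _⟩ | ⟨_, hi⟩
      · rw [hi] at hiP hit
        obtain ⟨hv1, hf1⟩ := ubb habE (Sym2.mem_mk_left a b) heE hv
          (hbp_mem a s(a, b) habE (Sym2.mem_mk_left a b)) hiP
        rw [hf1, hv1] at hit
        exact (hit rfl).elim
      · rw [hi] at hiP hit
        obtain ⟨hv1, hf1⟩ := ubb habE (Sym2.mem_mk_right a b) heE hv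
          (hbp_mem b s(a, b) habE (Sym2.mem_mk_right a b)) hiP
        rw [hf1, hv1] at hit
        exact (hit rfl).elim
  -- adjacency of the edge player
  have adj_ep : ∀ z, G.Adj (ep s(x, y)) z ↔
      (z = me ∨ z = bp x s(x, y) ∨ z = bp y s(x, y)) := by
    intro z
    constructor
    · intro hadj
      have hepP : ep s(x, y) ∈ Pe s(x, y) := hep_mem _ heE
      rcases R.adj_cases _ z hadj with ⟨v, h1, h2⟩ | ⟨f, hf, h1, h2⟩ |
        ⟨v, f, hf, hvf, h1, h2⟩ | ⟨v, f, hf, hvf, hcs⟩ | ⟨v, f, hf, hvf, hcs⟩ |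
        ⟨a, b, hab, hcs⟩
      · exact (uveE heE h1 hepP).elim
      · rw [uee hf heE h1 hepP] at h2
        exact Or.inl ((adj_top_of_mem ste h2).mp hadj)
      · exact (ueb heE hf hvf hepP h1).elim
      · rcases hcs with ⟨hi, _⟩ | ⟨_, hi⟩
        · have hm := hbp_mem v f hf hvf
          rw [← hi] at hm
          exact (ueb heE hf hvf hepP hm).elim
        · have hm := hvp_mem v
          rw [← hi] at hm
          exact (uveE heE hm hepP).elim
      · rcases hcs with ⟨hi, _⟩ | ⟨hz, hi⟩
        · have hm := hbp_mem v f hf hvf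
          rw [← hi] at hm
          exact (ueb heE hf hvf hepP hm).elim
        · have hm := hep_mem f hf
          rw [← hi] at hm
          have hfe : f = s(x, y) := uee hf heE hm hepP
          rw [hfe] at hvf hz
          rcases Sym2.mem_iff.mp hvf with rfl | rfl
          · exact Or.inr (Or.inl hz)
          · exact Or.inr (Or.inr hz)
      · have habE : s(a, b) ∈ H.edgeSet := H.mem_edgeSet.mpr hab
        rcases hcs with ⟨hi, _⟩ | ⟨_, hi⟩
        · have hm := hbp_mem a s(a, b) habE (Sym2.mem_mk_left a b)
          rw [← hi] at hm
          exact (ueb heE habE (Sym2.mem_mk_left a b) hepP hm).elim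
        · have hm := hbp_mem b s(a, b) habE (Sym2.mem_mk_right a b)
          rw [← hi] at hm
          exact (ueb heE habE (Sym2.mem_mk_right a b) hepP hm).elim
    · rintro (rfl | rfl | rfl)
      · exact (ste.adj_iff _ ste.top_mem z ste.mid_mem).mpr (Or.inl ⟨rfl, rfl⟩)
      · exact (R.adj_be x s(x, y) heE hxe).symm
      · exact (R.adj_be y s(x, y) heE hye).symm
  -- adjacency of the incidence players
  have adj_bp_gen : ∀ (v w' : V), H.Adj v w' → s(v, w') = s(x, y) →
      ∀ (mv : N) (frv : Fin ((k + 1) / 3) → N),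
      IsPinchedDomeGadget G ((k + 1) / 3) (avgK' k) (Pve v s(x, y)) (bp v s(x, y)) mv frv →
      ∀ z, G.Adj (bp v s(x, y)) z ↔
        (z = mv ∨ z = vp v ∨ z = ep s(x, y) ∨ z = bp w' s(x, y)) := by
    intro v w' hvw hs mv frv stv z
    have hv : v ∈ s(x, y) := hs ▸ Sym2.mem_mk_left v w'
    have hw : w' ∈ s(x, y) := hs ▸ Sym2.mem_mk_right v w'
    have hbpP : bp v s(x, y) ∈ Pve v s(x, y) := hbp_mem v _ heE hv
    constructor
    · intro hadj
      rcases R.adj_cases _ z hadj with ⟨v', h1, h2⟩ | ⟨f, hf, h1, h2⟩ |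
        ⟨v', f, hf, hvf, h1, h2⟩ | ⟨v', f, hf, hvf, hcs⟩ | ⟨v', f, hf, hvf, hcs⟩ |
        ⟨a, b, hab, hcs⟩
      · exact (uvb heE hv h1 hbpP).elim
      · exact (ueb hf heE hv h1 hbpP).elim
      · obtain ⟨hv1, hf1⟩ := ubb hf hvf heE hv h1 hbpP
        rw [hv1, hf1] at h2
        exact Or.inl ((adj_top_of_mem stv h2).mp hadj)
      · rcases hcs with ⟨hi, hz⟩ | ⟨_, hi⟩
        · have hm := hbp_mem v' f hf hvf
          rw [← hi] at hm
          obtain ⟨hv1, _⟩ := ubb hf hvf heE hv hm hbpP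
          rw [hv1] at hz
          exact Or.inr (Or.inl hz)
        · have hm := hvp_mem v'
          rw [← hi] at hm
          exact (uvb heE hv hm hbpP).elim
      · rcases hcs with ⟨hi, hz⟩ | ⟨_, hi⟩
        · have hm := hbp_mem v' f hf hvf
          rw [← hi] at hm
          obtain ⟨_, hf1⟩ := ubb hf hvf heE hv hm hbpP
          rw [hf1] at hz
          exact Or.inr (Or.inr (Or.inl hz))
        · have hm := hep_mem f hf
          rw [← hi] at hm
          exact (ueb hf heE hv hm hbpP).elim
      · have habE : s(a, b) ∈ H.edgeSet := H.mem_edgeSet.mpr hab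
        rcases hcs with ⟨hi, hz⟩ | ⟨hz, hi⟩
        · have hm := hbp_mem a s(a, b) habE (Sym2.mem_mk_left a b)
          rw [← hi] at hm
          obtain ⟨hv1, hf1⟩ := ubb habE (Sym2.mem_mk_left a b) heE hv hm hbpP
          have hsab : s(a, b) = s(v, w') := hf1.trans hs.symm
          rcases Sym2.eq_iff.mp hsab with ⟨_, hbw⟩ | ⟨haw, _⟩
          · rw [hf1, hbw] at hz
            exact Or.inr (Or.inr (Or.inr hz))
          · exact absurd (hv1.symm.trans haw) hvw.ne
        · have hm := hbp_mem b s(a, b) habE (Sym2.mem_mk_right a b)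
          rw [← hi] at hm
          obtain ⟨hv1, hf1⟩ := ubb habE (Sym2.mem_mk_right a b) heE hv hm hbpP
          have hsab : s(a, b) = s(v, w') := hf1.trans hs.symm
          rcases Sym2.eq_iff.mp hsab with ⟨_, hbw⟩ | ⟨haw, _⟩
          · exact absurd (hv1.symm.trans hbw) hvw.ne
          · rw [hf1, haw] at hz
            exact Or.inr (Or.inr (Or.inr hz))
    · rintro (rfl | rfl | rfl | rfl)
      · exact (stv.adj_iff _ stv.top_mem z stv.mid_mem).mpr (Or.inl ⟨rfl, rfl⟩)
      · exact R.adj_bv v s(x, y) heE hv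
      · exact R.adj_be v s(x, y) heE hv
      · have := R.adj_bb v w' hvw
        rwa [hs] at this
  have adj_bx := adj_bp_gen x y hxy rfl mx frx stx
  have adj_by := adj_bp_gen y x hxy.symm Sym2.eq_swap my fry sty
  -- friendsIn characterizations
  have fIn_ep : ∀ X : Finset N, friendsIn G X (ep s(x, y))
      = X ∩ ({me, bp x s(x, y), bp y s(x, y)} : Finset N) := by
    intro X
    ext z
    rw [mem_friendsIn, Finset.mem_inter, adj_ep z]
    simp only [Finset.mem_insert, Finset.mem_singleton]
  have fIn_bx : ∀ X : Finset N, friendsIn G X (bp x s(x, y))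
      = X ∩ ({mx, vp x, ep s(x, y), bp y s(x, y)} : Finset N) := by
    intro X
    ext z
    rw [mem_friendsIn, Finset.mem_inter, adj_bx z]
    simp only [Finset.mem_insert, Finset.mem_singleton]
  have fIn_by : ∀ X : Finset N, friendsIn G X (bp y s(x, y))
      = X ∩ ({my, vp y, ep s(x, y), bp x s(x, y)} : Finset N) := by
    intro X
    ext z
    rw [mem_friendsIn, Finset.mem_inter, adj_by z]
    simp only [Finset.mem_insert, Finset.mem_singleton]
  -- numerics
  have hk5 : 5 ≤ k := by
    obtain ⟨c, hc⟩ := hdvd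
    omega
  have hch : 10 ≤ Nat.choose k 2 := by
    calc 10 = Nat.choose 5 2 := by decide
      _ ≤ Nat.choose k 2 := Nat.choose_le_choose 2 hk5
  have hK36 : 36 ≤ avgK' k := by
    rw [avgK']
    omega
  have h3db : 3 * ((k + 1) / 3) = k + 1 := Nat.mul_div_cancel' hdvd
  have hdb2 : 2 ≤ (k + 1) / 3 := by omega
  have hdbk : 2 * ((k + 1) / 3) + 9 ≤ avgK' k := by
    rw [avgK']
    omega
  -- lower bound on the number of players
  have hPvxc : (Pv x).card = avgK' k - 1 := by
    have := ((R.pdome_v x).choose_spec.choose_spec).card_eq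
    omega
  have hPvyc : (Pv y).card = avgK' k - 1 := by
    have := ((R.pdome_v y).choose_spec.choose_spec).card_eq
    omega
  have hPec : (Pe s(x, y)).card = avgK' k - 1 := by
    have := ste.card_eq
    omega
  have hcard3 : 3 * (avgK' k - 1) ≤ Fintype.card N := by
    have hdisj1 : Disjoint (Pv x) (Pv y) := R.disj_vv x y hxyne
    have hdisj2 : Disjoint (Pv x ∪ Pv y) (Pe s(x, y)) :=
      Finset.disjoint_union_left.mpr ⟨R.disj_v_e x _ heE, R.disj_v_e y _ heE⟩
    have h1 : (Pv x ∪ Pv y ∪ Pe s(x, y)).card = 3 * (avgK' k - 1) := by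
      rw [Finset.card_union_of_disjoint hdisj2, Finset.card_union_of_disjoint hdisj1,
        hPvxc, hPvyc, hPec]
      ring
    calc 3 * (avgK' k - 1) = (Pv x ∪ Pv y ∪ Pe s(x, y)).card := h1.symm
      _ ≤ Fintype.card N := Finset.card_le_univ _
  have hn2 : 2 ≤ Fintype.card N := by omega
  -- parts
  have hpart_e : ∀ i ∈ Pe s(x, y), Γ.part i = Pe s(x, y) := fun i hi => hΓe _ heE i hi
  have hpart_x : ∀ i ∈ Pve x s(x, y), Γ.part i = Pve x s(x, y) :=
    fun i hi => hΓve x _ heE hxe i hi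
  have hpart_y : ∀ i ∈ Pve y s(x, y), Γ.part i = Pve y s(x, y) :=
    fun i hi => hΓve y _ heE hye i hi
  -- the mids are not in C
  have hMe : (Pe s(x, y)).card = (avgK' k - 3) + 2 := by omega
  have hTe : ∀ z, G.Adj (ep s(x, y)) z →
      z ∈ ({me, bp x s(x, y), bp y s(x, y)} : Finset N) := by
    intro z h
    rcases (adj_ep z).mp h with rfl | rfl | rfl <;> simp
  have hTe4 : ({me, bp x s(x, y), bp y s(x, y)} : Finset N).card ≤ 4 := by
    have h1 := Finset.card_insert_le me ({bp x s(x, y), bp y s(x, y)} : Finset N)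
    have h2 := Finset.card_insert_le (bp x s(x, y)) ({bp y s(x, y)} : Finset N)
    have h3 : ({bp y s(x, y)} : Finset N).card = 1 := Finset.card_singleton _
    omega
  have hme_not : me ∉ C :=
    no_mid_gadget w Γ C hC hw ste hMe (by norm_num) (by omega) (by omega) (by omega)
      closedPe hpart_e _ hTe hTe4
  have hMx : (Pve x s(x, y)).card = (avgK' k - (k + 1) / 3 - 1) + 2 := by
    have := stx.card_eq
    omega
  have hMy : (Pve y s(x, y)).card = (avgK' k - (k + 1) / 3 - 1) + 2 := by
    have := sty.card_eq
    omega
  have hTx : ∀ z, G.Adj (bp x s(x, y)) z →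
      z ∈ ({mx, vp x, ep s(x, y), bp y s(x, y)} : Finset N) := by
    intro z h
    rcases (adj_bx z).mp h with rfl | rfl | rfl | rfl <;> simp
  have hTx4 : ({mx, vp x, ep s(x, y), bp y s(x, y)} : Finset N).card ≤ 4 := by
    have h1 := Finset.card_insert_le mx ({vp x, ep s(x, y), bp y s(x, y)} : Finset N)
    have h2 := Finset.card_insert_le (vp x) ({ep s(x, y), bp y s(x, y)} : Finset N)
    have h3 := Finset.card_insert_le (ep s(x, y)) ({bp y s(x, y)} : Finset N)
    have h4 : ({bp y s(x, y)} : Finset N).card = 1 := Finset.card_singleton _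
    omega
  have hTy : ∀ z, G.Adj (bp y s(x, y)) z →
      z ∈ ({my, vp y, ep s(x, y), bp x s(x, y)} : Finset N) := by
    intro z h
    rcases (adj_by z).mp h with rfl | rfl | rfl | rfl <;> simp
  have hTy4 : ({my, vp y, ep s(x, y), bp x s(x, y)} : Finset N).card ≤ 4 := by
    have h1 := Finset.card_insert_le my ({vp y, ep s(x, y), bp x s(x, y)} : Finset N)
    have h2 := Finset.card_insert_le (vp y) ({ep s(x, y), bp x s(x, y)} : Finset N)
    have h3 := Finset.card_insert_le (ep s(x, y)) ({bp x s(x, y)} : Finset N)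
    have h4 : ({bp x s(x, y)} : Finset N).card = 1 := Finset.card_singleton _
    omega
  have hmx_not : mx ∉ C :=
    no_mid_gadget w Γ C hC hw stx hMx (by omega) (by omega) (by omega) (by omega)
      (closedPve x hxe) hpart_x _ hTx hTx4
  have hmy_not : my ∉ C :=
    no_mid_gadget w Γ C hC hw sty hMy (by omega) (by omega) (by omega) (by omega)
      (closedPve y hye) hpart_y _ hTy hTy4
  -- integer casts of the numeric facts
  have hn3K : 3 * ((avgK' k : ℤ) - 1) ≤ (Fintype.card N : ℤ) := by
    have h1 : ((3 * (avgK' k - 1) : ℕ) : ℤ) ≤ (Fintype.card N : ℤ) := by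
      exact_mod_cast hcard3
    omega
  have hK36' : (36 : ℤ) ≤ (avgK' k : ℤ) := by exact_mod_cast hK36
  -- Γ-side average of the edge player
  have hFPe : friendsIn G (Pe s(x, y)) (ep s(x, y)) = {me} := by
    rw [friendsIn_top_subset ste (subset_refl _),
      Finset.inter_singleton_of_mem ste.mid_mem]
  have hfme_val : fval G (Pe s(x, y)) me
      = 3 * (Fintype.card N : ℤ) - (avgK' k : ℤ) + 5 := by
    rw [fval_P_mid ste closedPe hMe]
    have hc : ((avgK' k - 3 : ℕ) : ℤ) = (avgK' k : ℤ) - 3 := by omega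
    rw [hc]
    push_cast
    ring
  have haPe : aterm G (Pe s(x, y)) (ep s(x, y))
      = ((3 * (Fintype.card N : ℤ) - (avgK' k : ℤ) + 5 : ℤ) : ℚ) := by
    rw [aterm_eq hFPe ⟨me, Finset.mem_singleton_self me⟩, Finset.sum_singleton,
      Finset.card_singleton, hfme_val]
    push_cast
    ring
  have hmono_ep : aterm G (Pe s(x, y)) (ep s(x, y)) ≤ aterm G C (ep s(x, y)) := by
    have h := hC.2 _ he
    rw [hpart_e _ (hep_mem _ heE)] at h
    exact aterm_mono hw hn2 h
  -- ===== Step A : both incidence players are in C =====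
  have hbxC : bp x s(x, y) ∈ C := by
    by_contra hbx
    have hsub : friendsIn G C (ep s(x, y)) ⊆ {bp y s(x, y)} := by
      rw [fIn_ep C]
      intro z hz
      rcases Finset.mem_inter.mp hz with ⟨hzC, hzm⟩
      simp only [Finset.mem_insert, Finset.mem_singleton] at hzm
      rcases hzm with rfl | rfl | rfl
      · exact absurd hzC hme_not
      · exact absurd hzC hbx
      · exact Finset.mem_singleton_self _
    rcases Finset.subset_singleton_iff.mp hsub with hem | hsing
    · rw [haPe, aterm_empty hem] at hmono_ep
      have : 3 * (Fintype.card N : ℤ) - (avgK' k : ℤ) + 5 ≤ 0 := by exact_mod_cast hmono_ep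
      omega
    · have haC : aterm G C (ep s(x, y)) = ((fval G C (bp y s(x, y)) : ℤ) : ℚ) := by
        rw [aterm_eq hsing ⟨_, Finset.mem_singleton_self _⟩, Finset.sum_singleton,
          Finset.card_singleton]
        push_cast
        ring
      have hsubF : friendsIn G C (bp y s(x, y)) ⊆ ({vp y, ep s(x, y)} : Finset N) := by
        rw [fIn_by C]
        intro z hz
        rcases Finset.mem_inter.mp hz with ⟨hzC, hzm⟩
        simp only [Finset.mem_insert, Finset.mem_singleton] at hzm ⊢
        rcases hzm with rfl | rfl | rfl | rfl
        · exact absurd hzC hmy_not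
        · exact Or.inl rfl
        · exact Or.inr rfl
        · exact absurd hzC hbx
      have hcard2 : ((friendsIn G C (bp y s(x, y))).card : ℤ) ≤ 2 := by
        have h1 := Finset.card_le_card hsubF
        have h2 := Finset.card_insert_le (vp y) ({ep s(x, y)} : Finset N)
        have h3 : ({ep s(x, y)} : Finset N).card = 1 := Finset.card_singleton _
        omega
      have hb : fval G C (bp y s(x, y)) ≤ (Fintype.card N : ℤ) * 2 :=
        le_trans (fval_le_mul G C _) (mul_le_mul_of_nonneg_left hcard2 (Int.ofNat_nonneg _))
      rw [haPe, haC] at hmono_ep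
      have h4 : 3 * (Fintype.card N : ℤ) - (avgK' k : ℤ) + 5
          ≤ fval G C (bp y s(x, y)) := by exact_mod_cast hmono_ep
      omega
  have hbyC : bp y s(x, y) ∈ C := by
    by_contra hby
    have hsub : friendsIn G C (ep s(x, y)) ⊆ {bp x s(x, y)} := by
      rw [fIn_ep C]
      intro z hz
      rcases Finset.mem_inter.mp hz with ⟨hzC, hzm⟩
      simp only [Finset.mem_insert, Finset.mem_singleton] at hzm
      rcases hzm with rfl | rfl | rfl
      · exact absurd hzC hme_not
      · exact Finset.mem_singleton_self _
      · exact absurd hzC hby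
    rcases Finset.subset_singleton_iff.mp hsub with hem | hsing
    · rw [haPe, aterm_empty hem] at hmono_ep
      have : 3 * (Fintype.card N : ℤ) - (avgK' k : ℤ) + 5 ≤ 0 := by exact_mod_cast hmono_ep
      omega
    · have haC : aterm G C (ep s(x, y)) = ((fval G C (bp x s(x, y)) : ℤ) : ℚ) := by
        rw [aterm_eq hsing ⟨_, Finset.mem_singleton_self _⟩, Finset.sum_singleton,
          Finset.card_singleton]
        push_cast
        ring
      have hsubF : friendsIn G C (bp x s(x, y)) ⊆ ({vp x, ep s(x, y)} : Finset N) := by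
        rw [fIn_bx C]
        intro z hz
        rcases Finset.mem_inter.mp hz with ⟨hzC, hzm⟩
        simp only [Finset.mem_insert, Finset.mem_singleton] at hzm ⊢
        rcases hzm with rfl | rfl | rfl | rfl
        · exact absurd hzC hmx_not
        · exact Or.inl rfl
        · exact Or.inr rfl
        · exact absurd hzC hby
      have hcard2 : ((friendsIn G C (bp x s(x, y))).card : ℤ) ≤ 2 := by
        have h1 := Finset.card_le_card hsubF
        have h2 := Finset.card_insert_le (vp x) ({ep s(x, y)} : Finset N)
        have h3 : ({ep s(x, y)} : Finset N).card = 1 := Finset.card_singleton _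
        omega
      have hb : fval G C (bp x s(x, y)) ≤ (Fintype.card N : ℤ) * 2 :=
        le_trans (fval_le_mul G C _) (mul_le_mul_of_nonneg_left hcard2 (Int.ofNat_nonneg _))
      rw [haPe, haC] at hmono_ep
      have h4 : 3 * (Fintype.card N : ℤ) - (avgK' k : ℤ) + 5
          ≤ fval G C (bp x s(x, y)) := by exact_mod_cast hmono_ep
      omega
  -- distinctness of the relevant players
  have hne_bxby : bp x s(x, y) ≠ bp y s(x, y) := by
    intro h
    have hm := hbp_mem y s(x, y) heE hye
    rw [← h] at hm
    exact hxyne (ubb heE hxe heE hye (hbp_mem x s(x, y) heE hxe) hm).1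
  have hne_epbx : ep s(x, y) ≠ bp x s(x, y) := by
    intro h
    have hm := hep_mem s(x, y) heE
    rw [h] at hm
    exact ueb heE heE hxe hm (hbp_mem x s(x, y) heE hxe)
  have hne_epby : ep s(x, y) ≠ bp y s(x, y) := by
    intro h
    have hm := hep_mem s(x, y) heE
    rw [h] at hm
    exact ueb heE heE hye hm (hbp_mem y s(x, y) heE hye)
  have hne_vxep : vp x ≠ ep s(x, y) := by
    intro h
    have hm := hvp_mem x
    rw [h] at hm
    exact uveE heE hm (hep_mem s(x, y) heE)
  have hne_vyep : vp y ≠ ep s(x, y) := by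
    intro h
    have hm := hvp_mem y
    rw [h] at hm
    exact uveE heE hm (hep_mem s(x, y) heE)
  have hne_vxby : vp x ≠ bp y s(x, y) := by
    intro h
    have hm := hvp_mem x
    rw [h] at hm
    exact uvb heE hye hm (hbp_mem y s(x, y) heE hye)
  have hne_vybx : vp y ≠ bp x s(x, y) := by
    intro h
    have hm := hvp_mem y
    rw [h] at hm
    exact uvb heE hxe hm (hbp_mem x s(x, y) heE hxe)
  -- bounds on coalition values of the edge and incidence players
  have hfvC_ep : fval G C (ep s(x, y)) ≤ (Fintype.card N : ℤ) * 2 := by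
    have hsubF : friendsIn G C (ep s(x, y))
        ⊆ ({bp x s(x, y), bp y s(x, y)} : Finset N) := by
      rw [fIn_ep C]
      intro z hz
      rcases Finset.mem_inter.mp hz with ⟨hzC, hzm⟩
      simp only [Finset.mem_insert, Finset.mem_singleton] at hzm ⊢
      rcases hzm with rfl | rfl | rfl
      · exact absurd hzC hme_not
      · exact Or.inl rfl
      · exact Or.inr rfl
    have hcard2 : ((friendsIn G C (ep s(x, y))).card : ℤ) ≤ 2 := by
      have h1 := Finset.card_le_card hsubF
      have h2 := Finset.card_insert_le (bp x s(x, y)) ({bp y s(x, y)} : Finset N)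
      have h3 : ({bp y s(x, y)} : Finset N).card = 1 := Finset.card_singleton _
      omega
    exact le_trans (fval_le_mul G C _)
      (mul_le_mul_of_nonneg_left hcard2 (Int.ofNat_nonneg _))
  have hfvC_by : fval G C (bp y s(x, y)) ≤ (Fintype.card N : ℤ) * 3 := by
    have hsubF : friendsIn G C (bp y s(x, y))
        ⊆ ({vp y, ep s(x, y), bp x s(x, y)} : Finset N) := by
      rw [fIn_by C]
      intro z hz
      rcases Finset.mem_inter.mp hz with ⟨hzC, hzm⟩
      simp only [Finset.mem_insert, Finset.mem_singleton] at hzm ⊢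
      rcases hzm with rfl | rfl | rfl | rfl
      · exact absurd hzC hmy_not
      · exact Or.inl rfl
      · exact Or.inr (Or.inl rfl)
      · exact Or.inr (Or.inr rfl)
    have hcard3' : ((friendsIn G C (bp y s(x, y))).card : ℤ) ≤ 3 := by
      have h1 := Finset.card_le_card hsubF
      have h2 := Finset.card_insert_le (vp y) ({ep s(x, y), bp x s(x, y)} : Finset N)
      have h3 := Finset.card_insert_le (ep s(x, y)) ({bp x s(x, y)} : Finset N)
      have h4 : ({bp x s(x, y)} : Finset N).card = 1 := Finset.card_singleton _
      omega
    exact le_trans (fval_le_mul G C _)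
      (mul_le_mul_of_nonneg_left hcard3' (Int.ofNat_nonneg _))
  have hfvC_bx : fval G C (bp x s(x, y)) ≤ (Fintype.card N : ℤ) * 3 := by
    have hsubF : friendsIn G C (bp x s(x, y))
        ⊆ ({vp x, ep s(x, y), bp y s(x, y)} : Finset N) := by
      rw [fIn_bx C]
      intro z hz
      rcases Finset.mem_inter.mp hz with ⟨hzC, hzm⟩
      simp only [Finset.mem_insert, Finset.mem_singleton] at hzm ⊢
      rcases hzm with rfl | rfl | rfl | rfl
      · exact absurd hzC hmx_not
      · exact Or.inl rfl
      · exact Or.inr (Or.inl rfl)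
      · exact Or.inr (Or.inr rfl)
    have hcard3' : ((friendsIn G C (bp x s(x, y))).card : ℤ) ≤ 3 := by
      have h1 := Finset.card_le_card hsubF
      have h2 := Finset.card_insert_le (vp x) ({ep s(x, y), bp y s(x, y)} : Finset N)
      have h3 := Finset.card_insert_le (ep s(x, y)) ({bp y s(x, y)} : Finset N)
      have h4 : ({bp y s(x, y)} : Finset N).card = 1 := Finset.card_singleton _
      omega
    exact le_trans (fval_le_mul G C _)
      (mul_le_mul_of_nonneg_left hcard3' (Int.ofNat_nonneg _))
  -- ===== Step B : both vertex players are in C =====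
  have hdbZ : (2:ℤ) ≤ (((k+1)/3 : ℕ) : ℤ) := by exact_mod_cast hdb2
  have hdbkZ : 2 * (((k+1)/3 : ℕ) : ℤ) + 9 ≤ (avgK' k : ℤ) := by exact_mod_cast hdbk
  have hfmx_val : fval G (Pve x s(x, y)) mx
      = ((Fintype.card N : ℤ) + 1) * ((((k+1)/3 : ℕ) : ℤ) + 1)
        - ((avgK' k : ℤ) - (((k+1)/3 : ℕ) : ℤ)) := by
    rw [fval_P_mid stx (closedPve x hxe) hMx]
    have hc : ((avgK' k - (k + 1) / 3 - 1 : ℕ) : ℤ)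
        = (avgK' k : ℤ) - (((k+1)/3 : ℕ) : ℤ) - 1 := by omega
    rw [hc]
    ring
  have hfmy_val : fval G (Pve y s(x, y)) my
      = ((Fintype.card N : ℤ) + 1) * ((((k+1)/3 : ℕ) : ℤ) + 1)
        - ((avgK' k : ℤ) - (((k+1)/3 : ℕ) : ℤ)) := by
    rw [fval_P_mid sty (closedPve y hye) hMy]
    have hc : ((avgK' k - (k + 1) / 3 - 1 : ℕ) : ℤ)
        = (avgK' k : ℤ) - (((k+1)/3 : ℕ) : ℤ) - 1 := by omega
    rw [hc]
    ring
  have hvxC : vp x ∈ C := by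
    by_contra hvx
    have hFbx : friendsIn G C (bp x s(x, y))
        = ({ep s(x, y), bp y s(x, y)} : Finset N) := by
      rw [fIn_bx C]
      ext z
      rw [Finset.mem_inter]
      simp only [Finset.mem_insert, Finset.mem_singleton]
      constructor
      · rintro ⟨hzC, rfl | rfl | rfl | rfl⟩
        · exact absurd hzC hmx_not
        · exact absurd hzC hvx
        · exact Or.inl rfl
        · exact Or.inr rfl
      · rintro (rfl | rfl)
        · exact ⟨he, Or.inr (Or.inr (Or.inl rfl))⟩
        · exact ⟨hbyC, Or.inr (Or.inr (Or.inr rfl))⟩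
    have hnodup : ep s(x, y) ∉ ({bp y s(x, y)} : Finset N) := by
      simp [hne_epby]
    have hcardF : (({ep s(x, y), bp y s(x, y)} : Finset N).card : ℚ) = 2 := by
      rw [Finset.card_insert_of_notMem hnodup, Finset.card_singleton]
      norm_num
    have haCbx : aterm G C (bp x s(x, y))
        = ((fval G C (ep s(x, y)) + fval G C (bp y s(x, y)) : ℤ) : ℚ) / 2 := by
      rw [aterm_eq hFbx ⟨_, Finset.mem_insert_self _ _⟩, Finset.sum_insert hnodup,
        Finset.sum_singleton, hcardF]
    have hmono_bx : aterm G (Pve x s(x, y)) (bp x s(x, y)) ≤ aterm G C (bp x s(x, y)) := by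
      have h := hC.2 _ hbxC
      rw [hpart_x _ (hbp_mem x _ heE hxe)] at h
      exact aterm_mono hw hn2 h
    have hFPbx : friendsIn G (Pve x s(x, y)) (bp x s(x, y)) = {mx} := by
      rw [friendsIn_top_subset stx (subset_refl _),
        Finset.inter_singleton_of_mem stx.mid_mem]
    have haPbx : aterm G (Pve x s(x, y)) (bp x s(x, y))
        = ((fval G (Pve x s(x, y)) mx : ℤ) : ℚ) := by
      rw [aterm_eq hFPbx ⟨mx, Finset.mem_singleton_self mx⟩, Finset.sum_singleton,
        Finset.card_singleton]
      push_cast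
      ring
    rw [haPbx, haCbx] at hmono_bx
    rw [le_div_iff₀ (by norm_num : (0:ℚ) < 2)] at hmono_bx
    have hZ : fval G (Pve x s(x, y)) mx * 2
        ≤ fval G C (ep s(x, y)) + fval G C (bp y s(x, y)) := by
      exact_mod_cast hmono_bx
    rw [hfmx_val] at hZ
    have hprod : (Fintype.card N : ℤ) * 2 ≤ (Fintype.card N : ℤ) * (((k+1)/3 : ℕ) : ℤ) :=
      mul_le_mul_of_nonneg_left hdbZ (Int.ofNat_nonneg _)
    exact arith_stepB (Fintype.card N : ℤ) (avgK' k : ℤ) (((k+1)/3 : ℕ) : ℤ)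
      (fval G C (ep s(x, y))) (fval G C (bp y s(x, y)))
      hn3K hK36' hdbZ hprod hfvC_ep hfvC_by hZ
  have hvyC : vp y ∈ C := by
    by_contra hvy
    have hFby : friendsIn G C (bp y s(x, y))
        = ({ep s(x, y), bp x s(x, y)} : Finset N) := by
      rw [fIn_by C]
      ext z
      rw [Finset.mem_inter]
      simp only [Finset.mem_insert, Finset.mem_singleton]
      constructor
      · rintro ⟨hzC, rfl | rfl | rfl | rfl⟩
        · exact absurd hzC hmy_not
        · exact absurd hzC hvy
        · exact Or.inl rfl
        · exact Or.inr rfl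
      · rintro (rfl | rfl)
        · exact ⟨he, Or.inr (Or.inr (Or.inl rfl))⟩
        · exact ⟨hbxC, Or.inr (Or.inr (Or.inr rfl))⟩
    have hnodup : ep s(x, y) ∉ ({bp x s(x, y)} : Finset N) := by
      simp [hne_epbx]
    have hcardF : (({ep s(x, y), bp x s(x, y)} : Finset N).card : ℚ) = 2 := by
      rw [Finset.card_insert_of_notMem hnodup, Finset.card_singleton]
      norm_num
    have haCby : aterm G C (bp y s(x, y))
        = ((fval G C (ep s(x, y)) + fval G C (bp x s(x, y)) : ℤ) : ℚ) / 2 := by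
      rw [aterm_eq hFby ⟨_, Finset.mem_insert_self _ _⟩, Finset.sum_insert hnodup,
        Finset.sum_singleton, hcardF]
    have hmono_by : aterm G (Pve y s(x, y)) (bp y s(x, y)) ≤ aterm G C (bp y s(x, y)) := by
      have h := hC.2 _ hbyC
      rw [hpart_y _ (hbp_mem y _ heE hye)] at h
      exact aterm_mono hw hn2 h
    have hFPby : friendsIn G (Pve y s(x, y)) (bp y s(x, y)) = {my} := by
      rw [friendsIn_top_subset sty (subset_refl _),
        Finset.inter_singleton_of_mem sty.mid_mem]
    have haPby : aterm G (Pve y s(x, y)) (bp y s(x, y))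
        = ((fval G (Pve y s(x, y)) my : ℤ) : ℚ) := by
      rw [aterm_eq hFPby ⟨my, Finset.mem_singleton_self my⟩, Finset.sum_singleton,
        Finset.card_singleton]
      push_cast
      ring
    rw [haPby, haCby] at hmono_by
    rw [le_div_iff₀ (by norm_num : (0:ℚ) < 2)] at hmono_by
    have hZ : fval G (Pve y s(x, y)) my * 2
        ≤ fval G C (ep s(x, y)) + fval G C (bp x s(x, y)) := by
      exact_mod_cast hmono_by
    rw [hfmy_val] at hZ
    have hprod : (Fintype.card N : ℤ) * 2 ≤ (Fintype.card N : ℤ) * (((k+1)/3 : ℕ) : ℤ) :=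
      mul_le_mul_of_nonneg_left hdbZ (Int.ofNat_nonneg _)
    exact arith_stepB (Fintype.card N : ℤ) (avgK' k : ℤ) (((k+1)/3 : ℕ) : ℤ)
      (fval G C (ep s(x, y))) (fval G C (bp x s(x, y)))
      hn3K hK36' hdbZ hprod hfvC_ep hfvC_bx hZ
  -- ===== Step C : size bound =====
  have hFCe2 : friendsIn G C (ep s(x, y))
      = ({bp x s(x, y), bp y s(x, y)} : Finset N) := by
    rw [fIn_ep C]
    ext z
    rw [Finset.mem_inter]
    simp only [Finset.mem_insert, Finset.mem_singleton]
    constructor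
    · rintro ⟨hzC, rfl | rfl | rfl⟩
      · exact absurd hzC hme_not
      · exact Or.inl rfl
      · exact Or.inr rfl
    · rintro (rfl | rfl)
      · exact ⟨hbxC, Or.inr (Or.inl rfl)⟩
      · exact ⟨hbyC, Or.inr (Or.inr rfl)⟩
  have hFbx2 : friendsIn G C (bp x s(x, y))
      = ({vp x, ep s(x, y), bp y s(x, y)} : Finset N) := by
    rw [fIn_bx C]
    ext z
    rw [Finset.mem_inter]
    simp only [Finset.mem_insert, Finset.mem_singleton]
    constructor
    · rintro ⟨hzC, rfl | rfl | rfl | rfl⟩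
      · exact absurd hzC hmx_not
      · exact Or.inl rfl
      · exact Or.inr (Or.inl rfl)
      · exact Or.inr (Or.inr rfl)
    · rintro (rfl | rfl | rfl)
      · exact ⟨hvxC, Or.inr (Or.inl rfl)⟩
      · exact ⟨he, Or.inr (Or.inr (Or.inl rfl))⟩
      · exact ⟨hbyC, Or.inr (Or.inr (Or.inr rfl))⟩
  have hFby2 : friendsIn G C (bp y s(x, y))
      = ({vp y, ep s(x, y), bp x s(x, y)} : Finset N) := by
    rw [fIn_by C]
    ext z
    rw [Finset.mem_inter]
    simp only [Finset.mem_insert, Finset.mem_singleton]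
    constructor
    · rintro ⟨hzC, rfl | rfl | rfl | rfl⟩
      · exact absurd hzC hmy_not
      · exact Or.inl rfl
      · exact Or.inr (Or.inl rfl)
      · exact Or.inr (Or.inr rfl)
    · rintro (rfl | rfl | rfl)
      · exact ⟨hvyC, Or.inr (Or.inl rfl)⟩
      · exact ⟨he, Or.inr (Or.inr (Or.inl rfl))⟩
      · exact ⟨hbxC, Or.inr (Or.inr (Or.inr rfl))⟩
  have hcardbx : (({vp x, ep s(x, y), bp y s(x, y)} : Finset N).card : ℤ) = 3 := by
    rw [Finset.card_insert_of_notMem (by simp [hne_vxep, hne_vxby]),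
      Finset.card_insert_of_notMem (by simp [hne_epby]), Finset.card_singleton]
    norm_num
  have hcardby : (({vp y, ep s(x, y), bp x s(x, y)} : Finset N).card : ℤ) = 3 := by
    rw [Finset.card_insert_of_notMem (by simp [hne_vyep, hne_vybx]),
      Finset.card_insert_of_notMem (by simp [hne_epbx]), Finset.card_singleton]
    norm_num
  have hfvbx3 : fval G C (bp x s(x, y))
      = ((Fintype.card N : ℤ) + 1) * 3 - C.card + 1 := by
    rw [fval_eq, hFbx2, if_pos hbxC]
    rw [show ((({vp x, ep s(x, y), bp y s(x, y)} : Finset N).card : ℤ)) = 3 from hcardbx]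
  have hfvby3 : fval G C (bp y s(x, y))
      = ((Fintype.card N : ℤ) + 1) * 3 - C.card + 1 := by
    rw [fval_eq, hFby2, if_pos hbyC]
    rw [show ((({vp y, ep s(x, y), bp x s(x, y)} : Finset N).card : ℤ)) = 3 from hcardby]
  have hnodup2 : bp x s(x, y) ∉ ({bp y s(x, y)} : Finset N) := by
    simp [hne_bxby]
  have hcarde2 : (({bp x s(x, y), bp y s(x, y)} : Finset N).card : ℚ) = 2 := by
    rw [Finset.card_insert_of_notMem hnodup2, Finset.card_singleton]
    norm_num
  have haCe : aterm G C (ep s(x, y))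
      = ((((Fintype.card N : ℤ) + 1) * 3 - C.card + 1 : ℤ) : ℚ) := by
    rw [aterm_eq hFCe2 ⟨_, Finset.mem_insert_self _ _⟩, Finset.sum_insert hnodup2,
      Finset.sum_singleton, hcarde2, hfvbx3, hfvby3]
    push_cast
    ring
  rw [haPe, haCe] at hmono_ep
  have hfinZ : 3 * (Fintype.card N : ℤ) - (avgK' k : ℤ) + 5
      ≤ ((Fintype.card N : ℤ) + 1) * 3 - C.card + 1 := by exact_mod_cast hmono_ep
  have hfin : C.card < avgK' k := by omega
  exact ⟨hbxC, hbyC, hvxC, hvyC, hfin⟩
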